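/- arXiv:2107.00563 — 5 statements merged into one kernel-verified Lean document; each statement's English description precedes it below -/
import Mathlib

section
/- Under the empirical framework, assume E‖g(X_1)‖² < ∞. Then, almost surely, inf_{θ ∈ S^{m−1}} (1/n) ∑_{i=1}^n (θᵀ g(X_i))² 1_{θᵀ g(X_i) ≥ 0} converges, as n → ∞, to inf_{θ ∈ S^{m−1}} E[ (θᵀ g(X_1))² 1_{θᵀ g(X_1) ≥ 0} ]. -/
open MeasureTheory ProbabilityTheory Filter Topology

/-! The functions `θ ↦ (θᵀg(x))₊²` are Lipschitz on the unit sphere with constant `2‖g(x)‖₁²`,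
which is integrable. The strong law of large numbers, applied on a countable dense subset of the
sphere and to the Lipschitz constant, therefore makes the empirical means converge almost surely
uniformly on the (compact) sphere, and uniform convergence carries over to the infima. -/

section Infimum

variable {α : Type*} {K : Set α}

theorem csInf_image_le_csInf_image_add {a b : α → ℝ} {ε : ℝ} (hK : K.Nonempty)
    (ha : BddBelow (a '' K)) (h : ∀ x ∈ K, a x ≤ b x + ε) :
    sInf (a '' K) ≤ sInf (b '' K) + ε := by
  rw [← sub_le_iff_le_add]
  refine le_csInf (hK.image b) (Set.forall_mem_image.2 fun x hx => ?_)
  linarith [csInf_le ha (Set.mem_image_of_mem a hx), h x hx]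

theorem TendstoUniformlyOn.tendsto_sInf_image {ι : Type*} {l : Filter ι} {F : ι → α → ℝ}
    {f : α → ℝ} (h : TendstoUniformlyOn F f l K) (hf : BddBelow (f '' K)) :
    Tendsto (fun n => sInf (F n '' K)) l (𝓝 (sInf (f '' K))) := by
  rcases K.eq_empty_or_nonempty with rfl | hK
  · simpa using tendsto_const_nhds
  obtain ⟨c, hc⟩ := hf
  rw [Metric.tendsto_nhds]
  intro ε hε
  filter_upwards [Metric.tendstoUniformlyOn_iff.1 h (ε / 2) (half_pos hε)] with n hn
  have hclose : ∀ x ∈ K, |F n x - f x| < ε / 2 := fun x hx => by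
    rw [abs_sub_comm, ← Real.dist_eq]
    exact hn x hx
  have hFn : BddBelow (F n '' K) := ⟨c - ε / 2, Set.forall_mem_image.2 fun x hx => by
    linarith [hc (Set.mem_image_of_mem f hx), (abs_lt.1 (hclose x hx)).1]⟩
  have hle := csInf_image_le_csInf_image_add hK hFn (b := f) (ε := ε / 2) fun x hx => by
    linarith [(abs_lt.1 (hclose x hx)).2]
  have hge := csInf_image_le_csInf_image_add hK ⟨c, hc⟩ (b := F n) (ε := ε / 2) fun x hx => by
    linarith [(abs_lt.1 (hclose x hx)).1]
  rw [Real.dist_eq, abs_lt]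
  constructor <;> linarith

end Infimum

theorem tendstoUniformlyOn_of_lipschitzOn_of_tendsto_dense {α β ι : Type*} [PseudoMetricSpace α]
    [PseudoMetricSpace β] {l : Filter ι} {K D : Set α} (hK : IsCompact K) (hDK : D ⊆ K)
    (hKD : K ⊆ closure D) {F : ι → α → β} {f : α → β} {L : ℝ}
    (hF : ∀ᶠ n in l, ∀ x ∈ K, ∀ y ∈ K, dist (F n x) (F n y) ≤ L * dist x y)
    (hf : ∀ x ∈ K, ∀ y ∈ K, dist (f x) (f y) ≤ L * dist x y)
    (hD : ∀ x ∈ D, Tendsto (F · x) l (𝓝 (f x))) :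
    TendstoUniformlyOn F f l K := by
  rw [Metric.tendstoUniformlyOn_iff]
  intro ε hε
  set δ := ε / (3 * (|L| + 1))
  have hδ : 0 < δ := by positivity
  have hLδ : |L| * δ ≤ ε / 3 := by
    calc |L| * δ ≤ (|L| + 1) * δ := by gcongr; linarith
      _ = ε / 3 := by simp only [δ]; field_simp
  have hcover : K ⊆ ⋃ d ∈ D, Metric.ball d δ := fun x hx => by
    obtain ⟨d, hd, hxd⟩ := Metric.mem_closure_iff.1 (hKD hx) δ hδ
    exact Set.mem_biUnion hd (Metric.mem_ball.2 hxd)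
  obtain ⟨t, htD, ht, hKt⟩ :=
    hK.elim_finite_subcover_image (fun _ _ => Metric.isOpen_ball) hcover
  have hnet : ∀ᶠ n in l, ∀ d ∈ t, dist (f d) (F n d) < ε / 3 :=
    ht.eventually_all.2 fun d hd =>
      (Metric.tendsto_nhds.1 (hD d (htD hd)) (ε / 3) (by positivity)).mono fun n hn => by
        rwa [dist_comm]
  filter_upwards [hF, hnet] with n hFn hn x hx
  obtain ⟨d, hd, hxd⟩ := Set.mem_iUnion₂.1 (hKt hx)
  have hdK := hDK (htD hd)
  have hxd' : dist x d ≤ δ := (Metric.mem_ball.1 hxd).le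
  have hLip : ∀ {u : α → β}, (∀ x ∈ K, ∀ y ∈ K, dist (u x) (u y) ≤ L * dist x y) →
      dist (u x) (u d) ≤ |L| * δ := fun hu =>
    (hu x hx d hdK).trans (by gcongr; exact le_abs_self L)
  calc dist (f x) (F n x) ≤ dist (f x) (f d) + dist (f d) (F n d) + dist (F n d) (F n x) :=
        dist_triangle4 _ _ _ _
    _ < |L| * δ + ε / 3 + |L| * δ := by
        linarith [hLip hf, hn d hd, hLip hFn, dist_comm (F n d) (F n x)]
    _ ≤ ε := by linarith

theorem abs_average_sub_average_le {𝓧 : Type*} {f f' c : 𝓧 → ℝ} {d : ℝ}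
    (h : ∀ x, |f x - f' x| ≤ c x * d) (y : ℕ → 𝓧) (n : ℕ) :
    |(n : ℝ)⁻¹ * ∑ i ∈ Finset.range n, f (y i) - (n : ℝ)⁻¹ * ∑ i ∈ Finset.range n, f' (y i)| ≤
      ((n : ℝ)⁻¹ * ∑ i ∈ Finset.range n, c (y i)) * d := by
  rw [← mul_sub, ← Finset.sum_sub_distrib, abs_mul, abs_of_nonneg (by positivity), mul_assoc,
    Finset.sum_mul]
  gcongr
  exact (Finset.abs_sum_le_sum_abs _ _).trans (Finset.sum_le_sum fun i _ => h (y i))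

theorem abs_integral_sub_integral_le {𝓧 : Type*} [MeasurableSpace 𝓧] {P : Measure 𝓧}
    {f f' c : 𝓧 → ℝ} {d : ℝ} (hf : Integrable f P) (hf' : Integrable f' P)
    (hc : Integrable c P) (h : ∀ x, |f x - f' x| ≤ c x * d) :
    |∫ x, f x ∂P - ∫ x, f' x ∂P| ≤ (∫ x, c x ∂P) * d := by
  rw [← integral_sub hf hf', ← integral_mul_const]
  exact norm_integral_le_of_norm_le (f := fun x => f x - f' x) (hc.mul_const d) (ae_of_all _ h)

section EmpiricalMean

variable {Ω 𝓧 : Type*} [MeasurableSpace Ω] [MeasurableSpace 𝓧] {μ : Measure Ω}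
  {P : Measure 𝓧} {X : ℕ → Ω → 𝓧}

theorem ae_tendsto_empirical_mean (hXmeas : ∀ i, Measurable (X i))
    (hXid : ∀ i, Measure.map (X i) μ = P) (hXindep : iIndepFun X μ) {φ : 𝓧 → ℝ}
    (hφ : Measurable φ) (hint : Integrable φ P) :
    ∀ᵐ ω ∂μ, Tendsto (fun n : ℕ => (n : ℝ)⁻¹ * ∑ i ∈ Finset.range n, φ (X i ω))
      atTop (𝓝 (∫ x, φ x ∂P)) := by
  have hint' : Integrable φ (μ.map (X 0)) := hXid 0 ▸ hint
  have hident : ∀ i, IdentDistrib (φ ∘ X i) (φ ∘ X 0) μ μ := fun i =>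
    IdentDistrib.comp ⟨(hXmeas i).aemeasurable, (hXmeas 0).aemeasurable, by rw [hXid, hXid]⟩ hφ
  have hslln := strong_law_ae_real (fun i => φ ∘ X i)
    ((integrable_map_measure hint'.aestronglyMeasurable (hXmeas 0).aemeasurable).1 hint')
    (fun i j hij => (hXindep.indepFun hij).comp hφ hφ) hident
  have hmean : ∫ ω, φ (X 0 ω) ∂μ = ∫ x, φ x ∂P := by
    rw [← hXid 0, integral_map (hXmeas 0).aemeasurable hint'.aestronglyMeasurable]
  filter_upwards [hslln] with ω hω
  simpa only [Function.comp_apply, hmean, div_eq_inv_mul] using hω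

theorem ae_tendstoUniformlyOn_empirical_mean {α : Type*} [PseudoMetricSpace α]
    (hXmeas : ∀ i, Measurable (X i)) (hXid : ∀ i, Measure.map (X i) μ = P)
    (hXindep : iIndepFun X μ) {K : Set α} (hK : IsCompact K) {f : α → 𝓧 → ℝ} {c : 𝓧 → ℝ}
    (hfmeas : ∀ θ ∈ K, Measurable (f θ)) (hfint : ∀ θ ∈ K, Integrable (f θ) P)
    (hcmeas : Measurable c) (hcint : Integrable c P)
    (hLip : ∀ θ ∈ K, ∀ θ' ∈ K, ∀ x, |f θ x - f θ' x| ≤ c x * dist θ θ') :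
    ∀ᵐ ω ∂μ, TendstoUniformlyOn (fun (n : ℕ) θ => (n : ℝ)⁻¹ * ∑ i ∈ Finset.range n, f θ (X i ω))
      (fun θ => ∫ x, f θ x ∂P) atTop K := by
  obtain ⟨D, hDK, hDcount, hKD⟩ := hK.isSeparable.exists_countable_dense_subset
  have hD : ∀ᵐ ω ∂μ, ∀ θ ∈ D, Tendsto (fun n : ℕ => (n : ℝ)⁻¹ * ∑ i ∈ Finset.range n,
      f θ (X i ω)) atTop (𝓝 (∫ x, f θ x ∂P)) :=
    (ae_ball_iff hDcount).2 fun θ hθ =>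
      ae_tendsto_empirical_mean hXmeas hXid hXindep (hfmeas θ (hDK hθ)) (hfint θ (hDK hθ))
  filter_upwards [hD, ae_tendsto_empirical_mean hXmeas hXid hXindep hcmeas hcint]
    with ω hDω hcω
  refine tendstoUniformlyOn_of_lipschitzOn_of_tendsto_dense hK hDK hKD (L := ∫ x, c x ∂P + 1)
    ?_ (fun θ hθ θ' hθ' => ?_) hDω
  · filter_upwards [hcω.eventually (gt_mem_nhds (lt_add_one _))] with n hn θ hθ θ' hθ'
    rw [Real.dist_eq]
    exact (abs_average_sub_average_le (hLip θ hθ θ' hθ') (X · ω) n).trans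
      (mul_le_mul_of_nonneg_right hn.le dist_nonneg)
  · rw [Real.dist_eq]
    exact (abs_integral_sub_integral_le (hfint θ hθ) (hfint θ' hθ') hcint (hLip θ hθ θ' hθ')).trans
      (mul_le_mul_of_nonneg_right (lt_add_one _).le dist_nonneg)

end EmpiricalMean

noncomputable def posSq (a : ℝ) : ℝ := if 0 ≤ a then a ^ 2 else 0

theorem posSq_eq_max_sq (a : ℝ) : posSq a = max a 0 ^ 2 := by
  unfold posSq
  split_ifs with h
  · rw [max_eq_left h]
  · rw [max_eq_right (not_le.1 h).le, sq, zero_mul]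

theorem posSq_nonneg (a : ℝ) : 0 ≤ posSq a := by
  rw [posSq_eq_max_sq]
  positivity

theorem measurable_posSq : Measurable posSq := by
  have : posSq = fun a => max a 0 ^ 2 := funext posSq_eq_max_sq
  rw [this]
  fun_prop

theorem abs_posSq_sub_posSq_le (a b : ℝ) :
    |posSq a - posSq b| ≤ (|a| + |b|) * |a - b| := by
  rw [posSq_eq_max_sq, posSq_eq_max_sq, sq_sub_sq, abs_mul, abs_of_nonneg (by positivity)]
  refine mul_le_mul (add_le_add ?_ ?_) (abs_max_sub_max_le_abs a b 0) (abs_nonneg _)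
    (by positivity)
  exacts [max_le (le_abs_self a) (abs_nonneg a), max_le (le_abs_self b) (abs_nonneg b)]

theorem abs_sum_mul_le_norm_mul_sum_abs {ι : Type*} [Fintype ι] (θ v : ι → ℝ) :
    |∑ j, θ j * v j| ≤ ‖θ‖ * ∑ j, |v j| := by
  rw [Finset.mul_sum]
  refine (Finset.abs_sum_le_sum_abs _ _).trans (Finset.sum_le_sum fun j _ => ?_)
  rw [abs_mul, ← Real.norm_eq_abs (θ j)]
  exact mul_le_mul_of_nonneg_right (norm_le_pi_norm θ j) (abs_nonneg _)

theorem norm_le_one_of_sum_sq_eq_one {ι : Type*} [Fintype ι] {θ : ι → ℝ}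
    (h : ∑ j, θ j ^ 2 = 1) : ‖θ‖ ≤ 1 :=
  (pi_norm_le_iff_of_nonneg zero_le_one).2 fun j => by
    rw [Real.norm_eq_abs, ← sq_le_one_iff_abs_le_one, ← h]
    exact Finset.single_le_sum (fun j _ => sq_nonneg (θ j)) (Finset.mem_univ j)

theorem isCompact_setOf_sum_sq_eq_one {ι : Type*} [Fintype ι] :
    IsCompact {θ : ι → ℝ | ∑ j, θ j ^ 2 = 1} :=
  (isCompact_closedBall 0 1).of_isClosed_subset (isClosed_eq (by fun_prop) continuous_const)
    fun _ hθ => mem_closedBall_zero_iff.2 (norm_le_one_of_sum_sq_eq_one hθ)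

section PosSqProj

variable {ι 𝓧 : Type*} [Fintype ι] (g : 𝓧 → ι → ℝ)

noncomputable def posSqProj (θ : ι → ℝ) (x : 𝓧) : ℝ := posSq (∑ j, θ j * g x j)

theorem abs_posSqProj_sub_le {θ θ' : ι → ℝ} (hθ : ‖θ‖ ≤ 1) (hθ' : ‖θ'‖ ≤ 1) (x : 𝓧) :
    |posSqProj g θ x - posSqProj g θ' x| ≤ 2 * (∑ j, |g x j|) ^ 2 * dist θ θ' := by
  have hbound : ∀ {η : ι → ℝ}, ‖η‖ ≤ 1 → |∑ j, η j * g x j| ≤ ∑ j, |g x j| := fun hη =>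
    (abs_sum_mul_le_norm_mul_sum_abs _ _).trans
      (mul_le_of_le_one_left (Finset.sum_nonneg fun _ _ => abs_nonneg _) hη)
  have hdiff : |∑ j, θ j * g x j - ∑ j, θ' j * g x j| ≤ dist θ θ' * ∑ j, |g x j| := by
    simpa only [← Finset.sum_sub_distrib, ← sub_mul, dist_eq_norm, Pi.sub_apply] using
      abs_sum_mul_le_norm_mul_sum_abs (θ - θ') (g x)
  calc |posSqProj g θ x - posSqProj g θ' x|
      ≤ (|∑ j, θ j * g x j| + |∑ j, θ' j * g x j|) * |∑ j, θ j * g x j - ∑ j, θ' j * g x j| :=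
        abs_posSq_sub_posSq_le _ _
    _ ≤ (∑ j, |g x j| + ∑ j, |g x j|) * (dist θ θ' * ∑ j, |g x j|) := by
        gcongr
        exacts [hbound hθ, hbound hθ']
    _ = 2 * (∑ j, |g x j|) ^ 2 * dist θ θ' := by ring

theorem measurable_posSqProj {_ : MeasurableSpace 𝓧} (hg : ∀ j, Measurable fun x => g x j)
    (θ : ι → ℝ) : Measurable (posSqProj g θ) :=
  measurable_posSq.comp (Finset.measurable_sum _ fun j _ => (hg j).const_mul (θ j))

theorem integrable_posSqProj {_ : MeasurableSpace 𝓧} {P : Measure 𝓧}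
    (hg : ∀ j, Measurable fun x => g x j) (hg2 : Integrable (fun x => (∑ j, |g x j|) ^ 2) P)
    {θ : ι → ℝ} (hθ : ‖θ‖ ≤ 1) : Integrable (posSqProj g θ) P := by
  refine (hg2.const_mul 2).mono' (measurable_posSqProj g hg θ).aestronglyMeasurable
    (ae_of_all _ fun x => ?_)
  have h := abs_posSqProj_sub_le g hθ (norm_zero.trans_le zero_le_one) x
  have h0 : posSqProj g 0 x = 0 := by simp [posSqProj, posSq]
  rw [h0, sub_zero, dist_zero_right] at h
  exact h.trans (mul_le_of_le_one_right (by positivity) hθ)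

end PosSqProj

theorem stmt6_general {Ω 𝓧 : Type*} [MeasurableSpace Ω] [MeasurableSpace 𝓧]
    (μ : Measure Ω)
    (P : Measure 𝓧)
    (m : ℕ)
    (X : ℕ → Ω → 𝓧) (hXmeas : ∀ i, Measurable (X i))
    (hXid : ∀ i, Measure.map (X i) μ = P)
    (hXindep : iIndepFun X μ)
    (g : 𝓧 → Fin m → ℝ) (hgmeas : ∀ j, Measurable fun x => g x j)
    (hgL2 : ∀ j, MemLp (fun x => g x j) 2 P) :
    ∀ᵐ ω ∂μ,
      Tendsto (fun n : ℕ =>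
          sInf ((fun θ : Fin m → ℝ =>
              (n : ℝ)⁻¹ * ∑ i ∈ Finset.range n,
                (if 0 ≤ ∑ j, θ j * g (X i ω) j then (∑ j, θ j * g (X i ω) j) ^ 2 else 0))
            '' {θ : Fin m → ℝ | (∑ j, θ j ^ 2) = 1}))
        atTop
        (nhds (sInf ((fun θ : Fin m → ℝ =>
            ∫ x, (if 0 ≤ ∑ j, θ j * g x j then (∑ j, θ j * g x j) ^ 2 else 0) ∂P)
          '' {θ : Fin m → ℝ | (∑ j, θ j ^ 2) = 1}))) := by
  have hnorm : ∀ θ ∈ {θ : Fin m → ℝ | ∑ j, θ j ^ 2 = 1}, ‖θ‖ ≤ 1 :=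
    fun _ => norm_le_one_of_sum_sq_eq_one
  have hsum : Measurable fun x => ∑ j, |g x j| :=
    Finset.measurable_sum _ fun j _ => (hgmeas j).abs
  have hsq : Integrable (fun x => (∑ j, |g x j|) ^ 2) P :=
    (memLp_finsetSum _ fun j _ => (hgL2 j).abs).integrable_sq
  filter_upwards [ae_tendstoUniformlyOn_empirical_mean hXmeas hXid hXindep
    isCompact_setOf_sum_sq_eq_one (fun θ _ => measurable_posSqProj g hgmeas θ)
    (fun θ hθ => integrable_posSqProj g hgmeas hsq (hnorm θ hθ))
    ((hsum.pow_const 2).const_mul 2) (hsq.const_mul 2)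
    (fun θ hθ θ' hθ' => abs_posSqProj_sub_le g (hnorm θ hθ) (hnorm θ' hθ'))] with ω hω
  -- the functions of `θ` in the statement are the unfolded `posSqProj g θ`
  exact hω.tendsto_sInf_image
    ⟨0, Set.forall_mem_image.2 fun θ _ => integral_nonneg fun x => posSq_nonneg _⟩

/-- almost surely,
`inf_{θ ∈ S^{m-1}} (1/n) ∑_{i<n} (θᵀg(Xᵢ))² 1_{θᵀg(Xᵢ) ≥ 0}` converges to
`inf_{θ ∈ S^{m-1}} E[(θᵀg(X₁))² 1_{θᵀg(X₁) ≥ 0}]`. -/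
theorem stmt6 {Ω 𝓧 : Type*} [MeasurableSpace Ω] [MeasurableSpace 𝓧]
    (μ : Measure Ω) [IsProbabilityMeasure μ]
    (P : Measure 𝓧) [IsProbabilityMeasure P]
    (m : ℕ) (hm : 0 < m)
    (X : ℕ → Ω → 𝓧) (hXmeas : ∀ i, Measurable (X i))
    (hXid : ∀ i, Measure.map (X i) μ = P)
    (hXindep : iIndepFun X μ)
    (g : 𝓧 → Fin m → ℝ) (hgmeas : ∀ j, Measurable fun x => g x j)
    (hgL2 : ∀ j, MemLp (fun x => g x j) 2 P) :
    ∀ᵐ ω ∂μ,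
      Tendsto (fun n : ℕ =>
          sInf ((fun θ : Fin m → ℝ =>
              (n : ℝ)⁻¹ * ∑ i ∈ Finset.range n,
                (if 0 ≤ ∑ j, θ j * g (X i ω) j then (∑ j, θ j * g (X i ω) j) ^ 2 else 0))
            '' {θ : Fin m → ℝ | (∑ j, θ j ^ 2) = 1}))
        atTop
        (nhds (sInf ((fun θ : Fin m → ℝ =>
            ∫ x, (if 0 ≤ ∑ j, θ j * g x j then (∑ j, θ j * g x j) ^ 2 else 0) ∂P)
          '' {θ : Fin m → ℝ | (∑ j, θ j ^ 2) = 1}))) :=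
  stmt6_general μ P m X hXmeas hXid hXindep g hgmeas hgL2
end

section
/- Under the empirical framework with informed weights, assume Pg = 0, that Σ = Var_P(g) = P(ggᵀ) is positive definite, and that there exists ε > 0 with E‖g(X_1)‖^{4+ε} < ∞. Then, almost surely, there exists N such that for all n ≥ N one has p_i > 0 for every i ∈ {1,…,n}; in particular, almost surely for all n sufficiently large, ℙ_n^I = ∑_{i=1}^n p_i δ_{X_i} is a probability measure. -/
/-!
By the strong law `Σₙ → Σ`, so the entries of `Σₙ⁻¹` stay bounded, and both correction terms
`g(Xᵢ)ᵀ Σₙ⁻¹ ℙₙg` and `(ℙₙg)ᵀ Σₙ⁻¹ ℙₙg` in `n pᵢ` are `o(1)` uniformly in `i < n` as soon as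
`max_{i<n} ‖g(Xᵢ)‖ · ‖ℙₙg‖ → 0`.
Fix `1/(4+ε) < a < b < 1/4`. Markov's inequality for `‖g‖^(4+ε)` and Borel–Cantelli give
`‖g(Xᵢ)‖ < (i+1)^a` eventually, so `max_{i<n} ‖g(Xᵢ)‖ = O(n^a)`; the fourth-moment bound
`E (∑_{i<n} g_j(Xᵢ))⁴ = O(n²)` and Borel–Cantelli give `‖ℙₙg‖ = O(n^(-b))`.
-/

open MeasureTheory ProbabilityTheory Filter Matrix Finset Topology

theorem abs_dotProduct_mulVec_le {m : Type*} [Fintype m] (u v : m → ℝ) (B : Matrix m m ℝ) :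
    |u ⬝ᵥ B *ᵥ v| ≤ (∑ j, ∑ k, |B j k|) * ‖u‖ * ‖v‖ := by
  have hexp : u ⬝ᵥ B *ᵥ v = ∑ j, ∑ k, u j * B j k * v k := by
    simp only [dotProduct, mulVec, mul_sum, mul_assoc]
  rw [hexp, sum_mul, sum_mul]
  refine (abs_sum_le_sum_abs _ _).trans (sum_le_sum fun j _ => ?_)
  rw [sum_mul, sum_mul]
  refine (abs_sum_le_sum_abs _ _).trans (sum_le_sum fun k _ => ?_)
  rw [abs_mul, abs_mul, mul_comm |u j|, ← Real.norm_eq_abs (u j), ← Real.norm_eq_abs (v k)]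
  gcongr
  exacts [norm_le_pi_norm u j, norm_le_pi_norm v k]

theorem tendsto_natCast_add_one_rpow_div_natCast {c : ℝ} (hc : c < 1) :
    Tendsto (fun n : ℕ => ((n : ℝ) + 1) ^ c / n) atTop (𝓝 0) := by
  have hpow : Tendsto (fun n : ℕ => ((n : ℝ) + 1) ^ (c - 1)) atTop (𝓝 0) := by
    rw [show c - 1 = -(1 - c) by ring]
    exact (tendsto_rpow_neg_atTop (by linarith)).comp
      (tendsto_atTop_add_const_right _ 1 tendsto_natCast_atTop_atTop)
  have hratio : Tendsto (fun n : ℕ => ((n : ℝ) + 1) / n) atTop (𝓝 1) := by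
    simpa using (tendsto_natCast_div_add_atTop (1 : ℝ)).inv₀ one_ne_zero
  have hprod := hpow.mul hratio
  rw [zero_mul] at hprod
  refine hprod.congr fun n => ?_
  have hn : (n : ℝ) + 1 ≠ 0 := by positivity
  rw [Real.rpow_sub_one hn]
  field_simp

theorem summable_div_natCast_add_one_rpow (C : ℝ) {s : ℝ} (hs : 1 < s) :
    Summable fun n : ℕ => C / ((n : ℝ) + 1) ^ s := by
  have h := (summable_nat_add_iff 1).2 (Real.summable_nat_rpow_inv.2 hs)
  simpa [div_eq_mul_inv] using h.mul_left C

theorem pi_norm_le_sqrt_sum_sq {m : Type*} [Fintype m] (v : m → ℝ) :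
    ‖v‖ ≤ Real.sqrt (∑ j, v j ^ 2) :=
  (pi_norm_le_iff_of_nonneg (Real.sqrt_nonneg _)).2 fun j => by
    rw [Real.norm_eq_abs, ← Real.sqrt_sq_eq_abs]
    exact Real.sqrt_le_sqrt (single_le_sum (fun j _ => sq_nonneg (v j)) (mem_univ j))

theorem exists_forall_lt_le_add {u r : ℕ → ℝ} (hr0 : ∀ n, 0 ≤ r n) (hr : Monotone r)
    (hu : ∀ᶠ i in atTop, u i ≤ r i) : ∃ D, ∀ n, ∀ i < n, u i ≤ D + r n := by
  obtain ⟨I, hI⟩ := eventually_atTop.1 hu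
  refine ⟨∑ i ∈ range I, |u i|, fun n i hin => ?_⟩
  have hD : 0 ≤ ∑ i ∈ range I, |u i| := sum_nonneg fun i _ => abs_nonneg _
  rcases lt_or_ge i I with hiI | hiI
  · have hle := single_le_sum (fun i _ => abs_nonneg (u i)) (mem_range.2 hiI)
    linarith [le_abs_self (u i), hr0 n]
  · linarith [hI i hiI, hr hin.le]

theorem eventually_forall_lt_one_sub_dotProduct_add_pos {m : Type*} [Fintype m]
    {x v : ℕ → m → ℝ} {A : ℕ → Matrix m m ℝ} {A₀ : Matrix m m ℝ} {U V : ℕ → ℝ}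
    (hA : Tendsto A atTop (𝓝 A₀)) (hx : ∀ᶠ n in atTop, ∀ i < n, ‖x i‖ ≤ U n)
    (hv : ∀ᶠ n in atTop, ‖v n‖ ≤ V n) (hV : Tendsto V atTop (𝓝 0))
    (hUV : Tendsto (fun n => U n * V n) atTop (𝓝 0)) :
    ∀ᶠ n in atTop, ∀ i < n, 0 < 1 - x i ⬝ᵥ A n *ᵥ v n + v n ⬝ᵥ A n *ᵥ v n := by
  set c : ℕ → ℝ := fun n => ∑ j, ∑ k, |A n j k|
  have hc : Tendsto c atTop (𝓝 (∑ j, ∑ k, |A₀ j k|)) :=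
    tendsto_finsetSum _ fun j _ => tendsto_finsetSum _ fun k _ =>
      ((continuous_apply_apply j k).tendsto A₀).comp hA |>.abs
  have hcUV : ∀ᶠ n in atTop, c n * (U n * V n) < 1 / 2 := by
    refine (hc.mul hUV).eventually_lt_const ?_
    simp
  have hcVV : ∀ᶠ n in atTop, c n * (V n * V n) < 1 / 2 := by
    refine (hc.mul (hV.mul hV)).eventually_lt_const ?_
    simp
  filter_upwards [hx, hv, hcUV, hcVV] with n hxn hvn hcUVn hcVVn i hi
  have hc0 : 0 ≤ c n := by positivity
  have hV0 : 0 ≤ V n := (norm_nonneg _).trans hvn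
  have hU0 : 0 ≤ U n := (norm_nonneg _).trans (hxn i hi)
  have hxAv : |x i ⬝ᵥ A n *ᵥ v n| < 1 / 2 := by
    refine lt_of_le_of_lt ?_ hcUVn
    calc |x i ⬝ᵥ A n *ᵥ v n| ≤ c n * ‖x i‖ * ‖v n‖ := abs_dotProduct_mulVec_le _ _ _
      _ ≤ c n * (U n * V n) := by rw [mul_assoc]; gcongr; exact hxn i hi
  have hvAv : |v n ⬝ᵥ A n *ᵥ v n| < 1 / 2 := by
    refine lt_of_le_of_lt ?_ hcVVn
    calc |v n ⬝ᵥ A n *ᵥ v n| ≤ c n * ‖v n‖ * ‖v n‖ := abs_dotProduct_mulVec_le _ _ _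
      _ ≤ c n * (V n * V n) := by rw [mul_assoc]; gcongr
  linarith [abs_lt.1 hxAv, abs_lt.1 hvAv]

noncomputable section Empirical

variable {m : Type*}

/- With `x i = g(Xᵢ)` these are `ℙₙg`, `Σₙ` and the informed weights `pᵢ`. -/

def empiricalMean (x : ℕ → m → ℝ) (n : ℕ) : m → ℝ :=
  (n : ℝ)⁻¹ • ∑ i ∈ range n, x i

def empiricalCov (x : ℕ → m → ℝ) (n : ℕ) : Matrix m m ℝ :=
  (n : ℝ)⁻¹ • ∑ i ∈ range n, vecMulVec (x i) (x i)
    - vecMulVec (empiricalMean x n) (empiricalMean x n)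

def informedWeight [Fintype m] [DecidableEq m] (x : ℕ → m → ℝ) (n i : ℕ) : ℝ :=
  (n : ℝ)⁻¹ * (1 - x i ⬝ᵥ (empiricalCov x n)⁻¹ *ᵥ empiricalMean x n
    + empiricalMean x n ⬝ᵥ (empiricalCov x n)⁻¹ *ᵥ empiricalMean x n)

@[simp]
theorem empiricalMean_apply (x : ℕ → m → ℝ) (n : ℕ) (j : m) :
    empiricalMean x n j = (n : ℝ)⁻¹ * ∑ i ∈ range n, x i j := by
  simp [empiricalMean]

@[simp]
theorem empiricalCov_apply (x : ℕ → m → ℝ) (n : ℕ) (j k : m) :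
    empiricalCov x n j k = (n : ℝ)⁻¹ * ∑ i ∈ range n, x i j * x i k
      - empiricalMean x n j * empiricalMean x n k := by
  simp [empiricalCov, vecMulVec_apply, Matrix.sum_apply]

variable {x : ℕ → m → ℝ}

theorem eventually_norm_empiricalMean_le [Fintype m] {c : ℕ → ℝ} (hc : ∀ n, 0 ≤ c n)
    (hsum : ∀ j, ∀ᶠ n in atTop, |∑ i ∈ range n, x i j| ≤ c n) :
    ∀ᶠ n in atTop, ‖empiricalMean x n‖ ≤ c n / n := by
  filter_upwards [eventually_all.2 hsum] with n hn
  refine (pi_norm_le_iff_of_nonneg (div_nonneg (hc n) n.cast_nonneg)).2 fun j => ?_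
  rw [empiricalMean_apply, norm_mul, norm_inv, Real.norm_natCast, Real.norm_eq_abs,
    inv_mul_eq_div]
  gcongr
  exact hn j

theorem tendsto_empiricalCov {Sig : Matrix m m ℝ}
    (hcov : ∀ j k, Tendsto (fun n : ℕ => (∑ i ∈ range n, x i j * x i k) / n) atTop
      (𝓝 (Sig j k)))
    (hmean : Tendsto (empiricalMean x) atTop (𝓝 0)) :
    Tendsto (empiricalCov x) atTop (𝓝 Sig) := by
  refine tendsto_pi_nhds.2 fun j => tendsto_pi_nhds.2 fun k => ?_
  have hprod := ((continuous_apply j).tendsto 0 |>.comp hmean).mul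
    ((continuous_apply k).tendsto 0 |>.comp hmean)
  simpa [inv_mul_eq_div] using (hcov j k).sub hprod

theorem eventually_isUnit_det_empiricalCov_and_informedWeight_pos [Fintype m] [DecidableEq m]
    {Sig : Matrix m m ℝ} (hSig : IsUnit Sig.det) {a b : ℝ} (ha : 0 ≤ a) (hab : a < b)
    (hcov : ∀ j k, Tendsto (fun n : ℕ => (∑ i ∈ range n, x i j * x i k) / n) atTop
      (𝓝 (Sig j k)))
    (hmax : ∀ᶠ i in atTop, ‖x i‖ ≤ ((i : ℝ) + 1) ^ a)
    (hsum : ∀ j, ∀ᶠ n in atTop, |∑ i ∈ range n, x i j| ≤ ((n : ℝ) + 1) ^ (1 - b)) :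
    ∀ᶠ n in atTop, IsUnit (empiricalCov x n).det ∧ ∀ i < n, 0 < informedWeight x n i := by
  have hV : Tendsto (fun n : ℕ => ((n : ℝ) + 1) ^ (1 - b) / n) atTop (𝓝 0) :=
    tendsto_natCast_add_one_rpow_div_natCast (by linarith)
  have hmeanV := eventually_norm_empiricalMean_le (fun n => by positivity) hsum
  have hcovn := tendsto_empiricalCov hcov (squeeze_zero_norm' hmeanV hV)
  have hdet : ∀ᶠ n in atTop, IsUnit (empiricalCov x n).det :=
    ((continuous_id.matrix_det.tendsto Sig).comp hcovn).eventually (Units.isOpen.mem_nhds hSig)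
  have hinv : Tendsto (fun n => (empiricalCov x n)⁻¹) atTop (𝓝 Sig⁻¹) :=
    (continuousAt_matrix_inv Sig (hSig.unit_spec ▸ NormedRing.inverse_continuousAt hSig.unit)
      ).tendsto.comp hcovn
  obtain ⟨D, hD⟩ := exists_forall_lt_le_add (u := fun i => ‖x i‖)
    (r := fun i => ((i : ℝ) + 1) ^ a) (fun n => by positivity)
    (fun i j hij => by dsimp only; gcongr) hmax
  have hUV : Tendsto (fun n : ℕ => (D + ((n : ℝ) + 1) ^ a) * (((n : ℝ) + 1) ^ (1 - b) / n))
      atTop (𝓝 0) := by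
    have hsplit : ∀ n : ℕ, (D + ((n : ℝ) + 1) ^ a) * (((n : ℝ) + 1) ^ (1 - b) / n)
        = D * (((n : ℝ) + 1) ^ (1 - b) / n) + ((n : ℝ) + 1) ^ (a + (1 - b)) / n := fun n => by
      rw [Real.rpow_add (by positivity)]
      ring
    simpa [hsplit] using (hV.const_mul D).add
      (tendsto_natCast_add_one_rpow_div_natCast (c := a + (1 - b)) (by linarith))
  have hpos := eventually_forall_lt_one_sub_dotProduct_add_pos hinv
    (Eventually.of_forall fun n i hi => hD n i hi) hmeanV hV hUV
  filter_upwards [hdet, hpos] with n hdetn hposn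
  refine ⟨hdetn, fun i hi => mul_pos ?_ (hposn i hi)⟩
  have : (0 : ℝ) < n := by exact_mod_cast (Nat.zero_le i).trans_lt hi
  positivity

end Empirical

section Moments

variable {Ω : Type*} [MeasurableSpace Ω] {μ : Measure Ω}

theorem MeasureTheory.MemLp.integrable_pow_of_le [IsFiniteMeasure μ] {f : Ω → ℝ} {n k : ℕ}
    (hf : MemLp f n μ) (hk : k ≤ n) : Integrable (fun ω => f ω ^ k) μ := by
  have hnorm := (hf.mono_exponent (p := k) (by exact_mod_cast hk)).integrable_norm_pow'
  refine (integrable_norm_iff (hf.aestronglyMeasurable.pow k)).1 ?_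
  simpa only [Pi.pow_apply, norm_pow] using hnorm

theorem ProbabilityTheory.IndepFun.integral_add_pow [IsFiniteMeasure μ] {S Y : Ω → ℝ}
    (h : IndepFun S Y μ) {n : ℕ} (hSn : MemLp S n μ) (hYn : MemLp Y n μ) :
    ∫ ω, (S ω + Y ω) ^ n ∂μ
      = ∑ k ∈ range (n + 1), (∫ ω, S ω ^ k ∂μ) * (∫ ω, Y ω ^ (n - k) ∂μ) * n.choose k := by
  have hterm : ∀ k ∈ range (n + 1), Integrable (fun ω => S ω ^ k * Y ω ^ (n - k)) μ := by
    intro k hk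
    exact (h.comp (measurable_id.pow_const k) (measurable_id.pow_const (n - k))).integrable_mul
      (hSn.integrable_pow_of_le (by simp at hk; omega)) (hYn.integrable_pow_of_le (by omega))
  simp_rw [add_pow]
  rw [integral_finsetSum _ fun k hk => (hterm k hk).mul_const _]
  refine sum_congr rfl fun k hk => ?_
  rw [integral_mul_const]
  congr 1
  exact (h.comp (measurable_id.pow_const k) (measurable_id.pow_const (n - k))
    ).integral_mul_eq_mul_integral
      (hSn.integrable_pow_of_le (by simp at hk; omega)).aestronglyMeasurable
      (hYn.integrable_pow_of_le (by omega)).aestronglyMeasurable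

theorem integral_sum_range_pow_four_le [IsProbabilityMeasure μ] {Y : ℕ → Ω → ℝ}
    (hindep : iIndepFun Y μ) (hmeas : ∀ i, Measurable (Y i)) (hY : ∀ i, MemLp (Y i) 4 μ)
    (hmean : ∀ i, ∫ ω, Y i ω ∂μ = 0) {σ κ : ℝ} (hσ : ∀ i, ∫ ω, Y i ω ^ 2 ∂μ ≤ σ)
    (hκ : ∀ i, ∫ ω, Y i ω ^ 4 ∂μ ≤ κ) (n : ℕ) :
    ∫ ω, (∑ i ∈ range n, Y i ω) ^ 4 ∂μ ≤ n * κ + 3 * n ^ 2 * σ ^ 2 := by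
  have hS : ∀ n, MemLp (fun ω => ∑ i ∈ range n, Y i ω) 4 μ :=
    fun n => memLp_finsetSum _ fun i _ => hY i
  have hSmean : ∀ n, ∫ ω, ∑ i ∈ range n, Y i ω ∂μ = 0 := fun n => by
    rw [integral_finsetSum _ fun i _ => (hY i).integrable (by norm_num)]
    simp [hmean]
  have hSY : ∀ n, IndepFun (fun ω => ∑ i ∈ range n, Y i ω) (Y n) μ := fun n => by
    simpa only [Finset.sum_fn] using
      hindep.indepFun_finsetSum_of_notMem hmeas (notMem_range_self (n := n))
  have hexpand : ∀ n k, k ≤ 4 → ∫ ω, (∑ i ∈ range (n + 1), Y i ω) ^ k ∂μ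
      = ∑ l ∈ range (k + 1), (∫ ω, (∑ i ∈ range n, Y i ω) ^ l ∂μ)
          * (∫ ω, Y n ω ^ (k - l) ∂μ) * k.choose l := fun n k hk => by
    simp_rw [sum_range_succ _ n]
    exact (hSY n).integral_add_pow ((hS n).mono_exponent (by exact_mod_cast hk))
      ((hY n).mono_exponent (by exact_mod_cast hk))
  suffices ∫ ω, (∑ i ∈ range n, Y i ω) ^ 2 ∂μ ≤ n * σ ∧
      ∫ ω, (∑ i ∈ range n, Y i ω) ^ 4 ∂μ ≤ n * κ + 3 * n ^ 2 * σ ^ 2 from this.2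
  induction n with
  | zero => simp
  | succ n ih =>
    have hσ0 : 0 ≤ σ := (integral_nonneg fun ω => sq_nonneg (Y 0 ω)).trans (hσ 0)
    rw [hexpand n 2 (by norm_num), hexpand n 4 (by norm_num)]
    have hY2 : 0 ≤ ∫ ω, Y n ω ^ 2 ∂μ := integral_nonneg fun ω => sq_nonneg _
    have hcross := mul_le_mul ih.1 (hσ n) hY2 (by positivity)
    -- the terms of odd degree in `Y n` or in the partial sum vanish: both are centred
    simp [sum_range_succ, hSmean, hmean, Nat.choose]
    constructor <;> nlinarith [hσ n, hκ n, ih.1, ih.2]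

theorem ae_eventually_lt_of_summable_integral_div [IsFiniteMeasure μ] {f : ℕ → Ω → ℝ}
    {c : ℕ → ℝ} (hf0 : ∀ n, 0 ≤ᵐ[μ] f n) (hf : ∀ n, Integrable (f n) μ) (hc : ∀ n, 0 < c n)
    (hsum : Summable fun n => (∫ ω, f n ω ∂μ) / c n) :
    ∀ᵐ ω ∂μ, ∀ᶠ n in atTop, f n ω < c n := by
  have hmarkov : ∀ n, μ {ω | c n ≤ f n ω} ≤ ENNReal.ofReal ((∫ ω, f n ω ∂μ) / c n) := by
    intro n
    rw [← ofReal_measureReal]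
    refine ENNReal.ofReal_le_ofReal ?_
    rw [le_div_iff₀ (hc n), mul_comm]
    exact mul_meas_ge_le_integral_of_nonneg (hf0 n) (hf n) _
  have hfinite : ∑' n, μ {ω | c n ≤ f n ω} ≠ ⊤ := by
    refine ne_top_of_le_ne_top ?_ (ENNReal.tsum_le_tsum hmarkov)
    rw [← ENNReal.ofReal_tsum_of_nonneg
      (fun n => div_nonneg (integral_nonneg_of_ae (hf0 n)) (hc n).le) hsum]
    exact ENNReal.ofReal_ne_top
  filter_upwards [ae_eventually_notMem hfinite] with ω hω
  exact hω.mono fun n hn => lt_of_not_ge hn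

end Moments

theorem memLp_apply_of_integrable_sqrt_sum_sq_rpow {𝓧 m : Type*} [MeasurableSpace 𝓧] [Fintype m]
    {P : Measure 𝓧} {g : 𝓧 → m → ℝ} (hg : ∀ j, Measurable fun x => g x j) {q : ℝ} (hq : 0 < q)
    (hmom : Integrable (fun x => Real.sqrt (∑ j, g x j ^ 2) ^ q) P) (j : m) :
    MemLp (fun x => g x j) (ENNReal.ofReal q) P := by
  have hnorm : MemLp (fun x => Real.sqrt (∑ j, g x j ^ 2)) (ENNReal.ofReal q) P := by
    refine (integrable_norm_rpow_iff ?_ (by simpa using hq) (by simp)).1 ?_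
    · exact (Finset.measurable_sum _ fun j _ => (hg j).pow_const 2).sqrt.aestronglyMeasurable
    refine hmom.congr (Eventually.of_forall fun x => ?_)
    simp [ENNReal.toReal_ofReal hq.le, abs_of_nonneg (Real.sqrt_nonneg _)]
  refine hnorm.of_le (hg j).aestronglyMeasurable (Eventually.of_forall fun x => ?_)
  rw [Real.norm_of_nonneg (Real.sqrt_nonneg _)]
  exact (norm_le_pi_norm (g x) j).trans (pi_norm_le_sqrt_sum_sq _)

section Sample

variable {Ω 𝓧 : Type*} [MeasurableSpace Ω] [MeasurableSpace 𝓧] {μ : Measure Ω}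
  {P : Measure 𝓧} {X : ℕ → Ω → 𝓧}

theorem integral_comp_of_map_eq {Y : Ω → 𝓧} (hY : Measurable Y) (hYP : μ.map Y = P)
    {φ : 𝓧 → ℝ} (hφ : Measurable φ) : ∫ ω, φ (Y ω) ∂μ = ∫ x, φ x ∂P := by
  subst hYP
  exact (integral_map hY.aemeasurable hφ.aestronglyMeasurable).symm

theorem memLp_comp_of_map_eq {Y : Ω → 𝓧} (hY : Measurable Y) (hYP : μ.map Y = P)
    {φ : 𝓧 → ℝ} {p : ENNReal} (hφ : MemLp φ p P) : MemLp (fun ω => φ (Y ω)) p μ := by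
  subst hYP
  exact (memLp_map_measure_iff hφ.aestronglyMeasurable hY.aemeasurable).1 hφ

theorem ae_tendsto_sum_comp_div (hXmeas : ∀ i, Measurable (X i)) (hXP : ∀ i, μ.map (X i) = P)
    (hXindep : iIndepFun X μ) {φ : 𝓧 → ℝ} (hφ : Measurable φ) (hint : Integrable φ P) :
    ∀ᵐ ω ∂μ, Tendsto (fun n : ℕ => (∑ i ∈ range n, φ (X i ω)) / n) atTop
      (𝓝 (∫ x, φ x ∂P)) := by
  have hident : ∀ i, IdentDistrib (φ ∘ X i) (φ ∘ X 0) μ μ := fun i =>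
    ⟨(hφ.comp (hXmeas i)).aemeasurable, (hφ.comp (hXmeas 0)).aemeasurable, by
      rw [← Measure.map_map hφ (hXmeas i), ← Measure.map_map hφ (hXmeas 0), hXP, hXP]⟩
  have hint0 : Integrable (φ ∘ X 0) μ :=
    memLp_one_iff_integrable.1
      (memLp_comp_of_map_eq (hXmeas 0) (hXP 0) (memLp_one_iff_integrable.2 hint))
  have hslln := strong_law_ae_real (fun i => φ ∘ X i) hint0
    (fun i j hij => (hXindep.comp (fun _ => φ) fun _ => hφ).indepFun hij) hident
  rwa [← integral_comp_of_map_eq (hXmeas 0) (hXP 0) hφ]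

theorem ae_eventually_lt_rpow (hXmeas : ∀ i, Measurable (X i)) (hXP : ∀ i, μ.map (X i) = P)
    [IsProbabilityMeasure μ] {f : 𝓧 → ℝ} (hf : Measurable f) (hf0 : ∀ x, 0 ≤ f x) {q a : ℝ}
    (hq : 0 < q) (hint : Integrable (fun x => f x ^ q) P) (haq : 1 < a * q) :
    ∀ᵐ ω ∂μ, ∀ᶠ i in atTop, f (X i ω) < ((i : ℝ) + 1) ^ a := by
  have hfq : Measurable fun x => f x ^ q := hf.pow_const q
  have hint_comp : ∀ i, Integrable (fun ω => f (X i ω) ^ q) μ := fun i =>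
    memLp_one_iff_integrable.1
      (memLp_comp_of_map_eq (hXmeas i) (hXP i) (memLp_one_iff_integrable.2 hint))
  have hBC := ae_eventually_lt_of_summable_integral_div (μ := μ)
    (f := fun i ω => f (X i ω) ^ q) (c := fun i => ((i : ℝ) + 1) ^ (a * q))
    (fun i => Eventually.of_forall fun ω => Real.rpow_nonneg (hf0 _) q) hint_comp
    (fun i => by positivity)
    (by simpa [integral_comp_of_map_eq (hXmeas _) (hXP _) hfq] using
      summable_div_natCast_add_one_rpow (∫ x, f x ^ q ∂P) haq)
  filter_upwards [hBC] with ω hω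
  filter_upwards [hω] with i hi
  rwa [Real.rpow_mul (by positivity), Real.rpow_lt_rpow_iff (hf0 _) (by positivity) hq] at hi

theorem ae_eventually_abs_sum_lt_rpow (hXmeas : ∀ i, Measurable (X i))
    (hXP : ∀ i, μ.map (X i) = P) (hXindep : iIndepFun X μ) [IsProbabilityMeasure μ]
    {φ : 𝓧 → ℝ} (hφ : Measurable φ) (hφ4 : MemLp φ 4 P) (hφ0 : ∫ x, φ x ∂P = 0) {b : ℝ}
    (hb : b < 1 / 4) :
    ∀ᵐ ω ∂μ, ∀ᶠ n in atTop, |∑ i ∈ range n, φ (X i ω)| < ((n : ℝ) + 1) ^ (1 - b) := by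
  set σ := ∫ x, φ x ^ 2 ∂P
  set κ := ∫ x, φ x ^ 4 ∂P
  have hmoment := integral_sum_range_pow_four_le (μ := μ) (Y := fun i ω => φ (X i ω))
    (hXindep.comp _ fun _ => hφ) (fun i => hφ.comp (hXmeas i))
    (fun i => memLp_comp_of_map_eq (hXmeas i) (hXP i) hφ4)
    (fun i => (integral_comp_of_map_eq (hXmeas i) (hXP i) hφ).trans hφ0)
    (fun i => (integral_comp_of_map_eq (hXmeas i) (hXP i) (hφ.pow_const 2)).le)
    (fun i => (integral_comp_of_map_eq (hXmeas i) (hXP i) (hφ.pow_const 4)).le)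
  have hκ0 : 0 ≤ κ := integral_nonneg fun x => by positivity
  have hmoment_le : ∀ n : ℕ, ∫ ω, (∑ i ∈ range n, φ (X i ω)) ^ 4 ∂μ
      ≤ (κ + 3 * σ ^ 2) * ((n : ℝ) + 1) ^ (2 : ℝ) := fun n => by
    refine (hmoment n).trans ?_
    rw [Real.rpow_two]
    nlinarith [sq_nonneg σ, (n.cast_nonneg : (0 : ℝ) ≤ n)]
  have hBC := ae_eventually_lt_of_summable_integral_div (μ := μ)
    (f := fun n ω => (∑ i ∈ range n, φ (X i ω)) ^ 4)
    (c := fun n => ((n : ℝ) + 1) ^ ((1 - b) * 4))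
    (fun n => Eventually.of_forall fun ω => by positivity)
    (fun n => memLp_finsetSum _ (fun i _ => memLp_comp_of_map_eq (hXmeas i) (hXP i) hφ4)
      |>.integrable_pow_of_le le_rfl)
    (fun n => by positivity) ?_
  · filter_upwards [hBC] with ω hω
    filter_upwards [hω] with n hn
    rw [Real.rpow_mul (by positivity), Real.rpow_ofNat, ← Even.pow_abs ⟨2, rfl⟩] at hn
    exact (pow_lt_pow_iff_left₀ (abs_nonneg _) (by positivity) four_ne_zero).1 hn
  · refine (summable_div_natCast_add_one_rpow (κ + 3 * σ ^ 2) (s := (1 - b) * 4 - 2)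
      (by linarith)).of_nonneg_of_le (fun n => div_nonneg (integral_nonneg fun ω => by positivity)
        (by positivity)) fun n => ?_
    rw [Real.rpow_sub (by positivity), div_div_eq_mul_div]
    exact div_le_div_of_nonneg_right (hmoment_le n) (by positivity)

theorem ae_tendsto_sum_mul_div {m : Type*} [Fintype m] (hXmeas : ∀ i, Measurable (X i))
    (hXP : ∀ i, μ.map (X i) = P) (hXindep : iIndepFun X μ) {g : 𝓧 → m → ℝ}
    (hg : ∀ j, Measurable fun x => g x j) (hg2 : ∀ j, MemLp (fun x => g x j) 2 P) :
    ∀ᵐ ω ∂μ, ∀ j k, Tendsto (fun n : ℕ => (∑ i ∈ range n, g (X i ω) j * g (X i ω) k) / n)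
      atTop (𝓝 (∫ x, g x j * g x k ∂P)) := by
  simp only [ae_all_iff]
  exact fun j k => ae_tendsto_sum_comp_div hXmeas hXP hXindep ((hg j).mul (hg k))
    ((hg2 j).integrable_mul (hg2 k))

end Sample

theorem stmt12_general {Ω 𝓧 : Type*} [MeasurableSpace Ω] [MeasurableSpace 𝓧]
    (μ : Measure Ω) [IsProbabilityMeasure μ]
    (P : Measure 𝓧) [IsProbabilityMeasure P]
    (m : ℕ)
    (X : ℕ → Ω → 𝓧) (hXmeas : ∀ i, Measurable (X i))
    (hXid : ∀ i, Measure.map (X i) μ = P)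
    (hXindep : iIndepFun X μ)
    (g : 𝓧 → Fin m → ℝ) (hgmeas : ∀ j, Measurable fun x => g x j)
    (hPg : ∀ j, (∫ x, g x j ∂P) = 0)
    (Sig : Matrix (Fin m) (Fin m) ℝ)
    (hSig : ∀ j k, Sig j k = ∫ x, g x j * g x k ∂P)
    (hposdef : Sig.PosDef)
    (ε : ℝ) (hε : 0 < ε)
    (hmom : Integrable (fun x => Real.sqrt (∑ j, g x j ^ 2) ^ ((4 : ℝ) + ε)) P)
    (Png : ℕ → Ω → Fin m → ℝ)
    (hPng : ∀ n ω j, Png n ω j = (n : ℝ)⁻¹ * ∑ i ∈ Finset.range n, g (X i ω) j)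
    (Sign : ℕ → Ω → Matrix (Fin m) (Fin m) ℝ)
    (hSign : ∀ n ω j k, Sign n ω j k =
      (n : ℝ)⁻¹ * (∑ i ∈ Finset.range n, g (X i ω) j * g (X i ω) k)
        - Png n ω j * Png n ω k)
    (p : ℕ → Ω → ℕ → ℝ)
    (hp : ∀ n ω i, p n ω i = (n : ℝ)⁻¹ *
      (1 - g (X i ω) ⬝ᵥ ((Sign n ω)⁻¹ *ᵥ Png n ω)
        + Png n ω ⬝ᵥ ((Sign n ω)⁻¹ *ᵥ Png n ω))) :
    ∀ᵐ ω ∂μ, ∃ N : ℕ, ∀ n ≥ N,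
      IsUnit (Sign n ω).det ∧ ∀ i < n, 0 < p n ω i := by
  have hq : 0 < 4 + ε := by linarith
  have hg4 : ∀ j, MemLp (fun x => g x j) 4 P := fun j =>
    (memLp_apply_of_integrable_sqrt_sum_sq_rpow hgmeas hq hmom j).mono_exponent <| by
      rw [← ENNReal.ofReal_ofNat]; exact ENNReal.ofReal_le_ofReal (by linarith)
  obtain ⟨a, hqa, ha⟩ := exists_between (one_div_lt_one_div_of_lt (by norm_num) (by linarith) :
    1 / (4 + ε) < 1 / 4)
  obtain ⟨b, hab, hb⟩ := exists_between ha
  have hslln := ae_tendsto_sum_mul_div hXmeas hXid hXindep hgmeas fun j =>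
    (hg4 j).mono_exponent (p := 2) (by norm_num)
  have hmax := ae_eventually_lt_rpow hXmeas hXid
    (Finset.measurable_sum _ fun j _ => (hgmeas j).pow_const 2).sqrt
    (fun x => Real.sqrt_nonneg _) hq hmom (by rwa [div_lt_iff₀ hq] at hqa)
  have hsum := ae_all_iff.2 fun j =>
    ae_eventually_abs_sum_lt_rpow hXmeas hXid hXindep (hgmeas j) (hg4 j) (hPg j) hb
  filter_upwards [hslln, hmax, hsum] with ω hslln hmax hsum
  obtain ⟨N, hN⟩ := eventually_atTop.1 <|
    eventually_isUnit_det_empiricalCov_and_informedWeight_pos (x := fun i => g (X i ω))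
      (isUnit_iff_ne_zero.2 hposdef.det_pos.ne') ((one_div_pos.2 hq).le.trans hqa.le) hab
      (fun j k => hSig j k ▸ hslln j k)
      (hmax.mono fun i hi => (pi_norm_le_sqrt_sum_sq _).trans hi.le)
      (fun j => (hsum j).mono fun n hn => hn.le)
  have hmean : ∀ n, Png n ω = empiricalMean (fun i => g (X i ω)) n := fun n =>
    funext fun j => by simp [hPng]
  have hcov : ∀ n, Sign n ω = empiricalCov (fun i => g (X i ω)) n := fun n => by
    ext j k
    simp [hSign, hmean]
  refine ⟨N, fun n hn => ?_⟩
  simpa only [hp, hcov, hmean, informedWeight] using hN n hn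

/-- under `Pg = 0`, `Σ = Var_P(g)` positive definite and
`E‖g(X₁)‖^{4+ε} < ∞`, almost surely, for all `n` large enough, the empirical
covariance matrix `Σₙ` is invertible and all the informed weights
`pᵢ = (1/n)(1 − g(Xᵢ)ᵀΣₙ⁻¹ℙₙg + (ℙₙg)ᵀΣₙ⁻¹ℙₙg)` are positive; in particular
`ℙₙᴵ = ∑ pᵢ δ_{Xᵢ}` is then a probability measure. -/
theorem stmt12 {Ω 𝓧 : Type*} [MeasurableSpace Ω] [MeasurableSpace 𝓧]
    (μ : Measure Ω) [IsProbabilityMeasure μ]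
    (P : Measure 𝓧) [IsProbabilityMeasure P]
    (m : ℕ) (hm : 0 < m)
    (X : ℕ → Ω → 𝓧) (hXmeas : ∀ i, Measurable (X i))
    (hXid : ∀ i, Measure.map (X i) μ = P)
    (hXindep : iIndepFun X μ)
    (g : 𝓧 → Fin m → ℝ) (hgmeas : ∀ j, Measurable fun x => g x j)
    (hPg : ∀ j, (∫ x, g x j ∂P) = 0)
    (Sig : Matrix (Fin m) (Fin m) ℝ)
    (hSig : ∀ j k, Sig j k = ∫ x, g x j * g x k ∂P)
    (hposdef : Sig.PosDef)
    (ε : ℝ) (hε : 0 < ε)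
    (hmom : Integrable (fun x => Real.sqrt (∑ j, g x j ^ 2) ^ ((4 : ℝ) + ε)) P)
    (Png : ℕ → Ω → Fin m → ℝ)
    (hPng : ∀ n ω j, Png n ω j = (n : ℝ)⁻¹ * ∑ i ∈ Finset.range n, g (X i ω) j)
    (Sign : ℕ → Ω → Matrix (Fin m) (Fin m) ℝ)
    (hSign : ∀ n ω j k, Sign n ω j k =
      (n : ℝ)⁻¹ * (∑ i ∈ Finset.range n, g (X i ω) j * g (X i ω) k)
        - Png n ω j * Png n ω k)
    (p : ℕ → Ω → ℕ → ℝ)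
    (hp : ∀ n ω i, p n ω i = (n : ℝ)⁻¹ *
      (1 - g (X i ω) ⬝ᵥ ((Sign n ω)⁻¹ *ᵥ Png n ω)
        + Png n ω ⬝ᵥ ((Sign n ω)⁻¹ *ᵥ Png n ω))) :
    ∀ᵐ ω ∂μ, ∃ N : ℕ, ∀ n ≥ N,
      IsUnit (Sign n ω).det ∧ ∀ i < n, 0 < p n ω i :=
  stmt12_general μ P m X hXmeas hXid hXindep g hgmeas hPg Sig hSig hposdef ε hε hmom Png hPng Sign
    hSign p hp
end

section
/- Let F : ℝ → ℝ be a cumulative distribution function, α ∈ (0,1), and q = F^{-1}(α) = inf{t ∈ ℝ : F(t) ≥ α}. Assume F is strictly increasing at q, in the sense that F(q − ε) < α < F(q + ε) for every ε > 0. Let (F_n)_{n≥1} be bounded functions ℝ → ℝ with lim_{t→−∞} F_n(t) = 0 and lim_{t→+∞} F_n(t) = 1, such that sup_{t∈ℝ} |F_n(t) − F(t)| → 0 as n → ∞. Then F_n^{-1}(α) := inf{t ∈ ℝ : F_n(t) ≥ α} converges to q as n → ∞. -/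
open Filter

/-- if `F` is a cdf strictly increasing at its `α`-quantile
`q = inf{t : F t ≥ α}` and `Fₙ → F` uniformly, with each `Fₙ` bounded and tending to
`0` at `−∞` and `1` at `+∞`, then `Fₙ⁻¹(α) → q`. -/
theorem stmt16 (F : ℝ → ℝ) (hFmono : Monotone F)
    (hFrc : ∀ t, ContinuousWithinAt F (Set.Ici t) t)
    (hF0 : Tendsto F atBot (nhds 0)) (hF1 : Tendsto F atTop (nhds 1))
    (α : ℝ) (hα : α ∈ Set.Ioo (0 : ℝ) 1)
    (q : ℝ) (hqdef : q = sInf {t : ℝ | α ≤ F t})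
    (hstrict : ∀ ε > (0 : ℝ), F (q - ε) < α ∧ α < F (q + ε))
    (Fn : ℕ → ℝ → ℝ)
    (hFnbdd : ∀ n, Bornology.IsBounded (Set.range (Fn n)))
    (hFn0 : ∀ n, Tendsto (Fn n) atBot (nhds 0))
    (hFn1 : ∀ n, Tendsto (Fn n) atTop (nhds 1))
    (hunif : TendstoUniformly Fn F atTop) :
    Tendsto (fun n => sInf {t : ℝ | α ≤ Fn n t}) atTop (nhds q) := by
  rw [Metric.tendsto_atTop]
  intro ε hε
  have hε2 : (0 : ℝ) < ε / 2 := by positivity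
  obtain ⟨h1, h2⟩ := hstrict (ε / 2) hε2
  set δ : ℝ := min (α - F (q - ε / 2)) (F (q + ε / 2) - α) with hδdef
  have hδ : 0 < δ := lt_min (by linarith) (by linarith)
  have hδ1 : δ ≤ α - F (q - ε / 2) := min_le_left _ _
  have hδ2 : δ ≤ F (q + ε / 2) - α := min_le_right _ _
  obtain ⟨N, hN⟩ := eventually_atTop.mp (Metric.tendstoUniformly_iff.mp hunif δ hδ)
  refine ⟨N, fun n hn => ?_⟩
  have hclose := hN n hn
  have hmem : q + ε / 2 ∈ {t : ℝ | α ≤ Fn n t} := by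
    have h := hclose (q + ε / 2)
    rw [Real.dist_eq, abs_lt] at h
    simp only [Set.mem_setOf_eq]
    linarith [h.1, h.2]
  have hlb : ∀ t ∈ {t : ℝ | α ≤ Fn n t}, q - ε / 2 ≤ t := by
    intro t ht
    by_contra hc
    push_neg at hc
    have hmt : F t ≤ F (q - ε / 2) := hFmono hc.le
    have h := hclose t
    rw [Real.dist_eq, abs_lt] at h
    have hat : α ≤ Fn n t := ht
    linarith [h.1, h.2]
  have hub : sInf {t : ℝ | α ≤ Fn n t} ≤ q + ε / 2 :=
    csInf_le ⟨q - ε / 2, hlb⟩ hmem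
  have hlb' : q - ε / 2 ≤ sInf {t : ℝ | α ≤ Fn n t} :=
    le_csInf ⟨_, hmem⟩ hlb
  rw [Real.dist_eq, abs_lt]
  constructor <;> linarith
end

section
/- Let F : ℝ → ℝ be a cumulative distribution function, α ∈ (0,1), and q = F^{-1}(α) = inf{t ∈ ℝ : F(t) ≥ α}. Assume F is differentiable at q with F′(q) > 0. Let h : ℝ → ℝ be a bounded function which is continuous at q, let (t_n) be a sequence of nonzero reals with t_n → 0, and let (h_n) be bounded functions with sup_{t∈ℝ} |h_n(t) − h(t)| → 0, such that each F + t_n h_n is bounded with limits 0 at −∞ and 1 at +∞. Then ( (F + t_n h_n)^{-1}(α) − F^{-1}(α) ) / t_n → − h(q) / F′(q) as n → ∞. (That is, the quantile map φ_α(H) = H^{-1}(α) is Hadamard differentiable at F tangentially to the functions continuous at q, with derivative φ′_α(h) = −h(F^{-1}(α))/F′(F^{-1}(α)).) -/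
/-!
Write `Gₙ = F + tₙ hₙ` and `Qₙ` for its `α`-quantile. Since `Gₙ → F` uniformly and `F` lies
strictly above `α` just right of `q`, `Qₙ → q`. The point `Qₙ - tₙ²` lies outside the superlevel
set `{Gₙ ≥ α}` and some `sₙ < Qₙ + tₙ²` lies inside it. For any `xₙ → q`, writing
`F xₙ - F q = (xₙ - q) · dslope F q xₙ` with `dslope F q xₙ → F' > 0` gives
`xₙ - q - tₙ c = (Gₙ xₙ - α) / dslope F q xₙ + o(tₙ)` with `c = -h q / F'`, because
`hₙ xₙ → h q`. The sign of `Gₙ xₙ - α` at these two points bounds `Qₙ - q - tₙ c` by `o(tₙ)`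
from both sides.
-/

open Filter Topology Asymptotics

section SuperlevelSet

variable {G : ℝ → ℝ} {α : ℝ}

lemma bddBelow_setOf_le_of_tendsto_atBot {a : ℝ} (hG : Tendsto G atBot (𝓝 a)) (ha : a < α) :
    BddBelow {t | α ≤ G t} := by
  obtain ⟨b, hb⟩ := eventually_atBot.mp (hG.eventually_lt_const ha)
  exact ⟨b, fun t ht => le_of_not_gt fun htb => (hb t htb.le).not_ge ht⟩

lemma nonempty_setOf_le_of_tendsto_atTop {b : ℝ} (hG : Tendsto G atTop (𝓝 b)) (hb : α < b) :
    {t | α ≤ G t}.Nonempty :=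
  (hG.eventually_const_lt hb).exists.imp fun _ ht => ht.le

lemma apply_lt_of_lt_csInf_setOf_le (hbdd : BddBelow {t | α ≤ G t}) {t : ℝ}
    (ht : t < sInf {t | α ≤ G t}) : G t < α :=
  lt_of_not_ge fun hle => notMem_of_lt_csInf ht hbdd hle

lemma apply_csInf_setOf_le_eq (hG : Monotone G) (hne : {t | α ≤ G t}.Nonempty)
    (hbdd : BddBelow {t | α ≤ G t}) (hcont : ContinuousAt G (sInf {t | α ≤ G t})) :
    G (sInf {t | α ≤ G t}) = α := by
  set q := sInf {t | α ≤ G t}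
  refine le_antisymm (le_of_tendsto (hcont.continuousWithinAt (s := Set.Iio q))
    (eventually_nhdsWithin_of_forall fun t ht => (apply_lt_of_lt_csInf_setOf_le hbdd ht).le))
    (ge_of_tendsto (hcont.continuousWithinAt (s := Set.Ioi q))
      (eventually_nhdsWithin_of_forall fun t ht => ?_))
  obtain ⟨s, hs, hst⟩ := exists_lt_of_csInf_lt hne ht
  exact hs.trans (hG hst.le)

end SuperlevelSet

lemma HasDerivAt.eventually_nhdsGT_apply_lt {F : ℝ → ℝ} {F' q : ℝ} (hF : HasDerivAt F F' q)
    (hF' : 0 < F') : ∀ᶠ x in 𝓝[>] q, F q < F x := by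
  filter_upwards [nhdsGT_le_nhdsNE q
      ((hasDerivAt_iff_tendsto_slope.1 hF).eventually (lt_mem_nhds hF')),
    self_mem_nhdsWithin] with x hx hqx
  exact (slope_pos_iff hqx).1 hx

lemma tendstoUniformly_add_mul {X ι : Type*} {l : Filter ι} {F h : X → ℝ} {hn : ι → X → ℝ}
    {tn : ι → ℝ} (hh : Bornology.IsBounded (Set.range h)) (hunif : TendstoUniformly hn h l)
    (htn : Tendsto tn l (𝓝 0)) :
    TendstoUniformly (fun n t => F t + tn n * hn n t) F l := by
  obtain ⟨M, hM0, hM⟩ := hh.exists_pos_norm_le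
  rw [Metric.tendstoUniformly_iff]
  intro ε hε
  filter_upwards [(Metric.tendstoUniformly_iff.1 hunif) 1 one_pos,
    (Metric.tendsto_nhds.1 htn) (ε / (M + 1)) (by positivity)] with n hhn htn t
  have hbound : |hn n t| ≤ M + 1 := by
    have hht := hM _ (Set.mem_range_self t)
    have hdist := hhn t
    rw [Real.norm_eq_abs] at hht
    rw [Real.dist_eq] at hdist
    linarith [abs_sub_abs_le_abs_sub (hn n t) (h t), abs_sub_comm (h t) (hn n t)]
  rw [Real.dist_eq, sub_zero] at htn
  rw [Real.dist_eq, sub_add_cancel_left, abs_neg, abs_mul]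
  calc |tn n| * |hn n t| ≤ |tn n| * (M + 1) := by gcongr
    _ < ε / (M + 1) * (M + 1) := by gcongr
    _ = ε := div_mul_cancel₀ _ (by positivity)

lemma tendsto_csInf_setOf_le_of_tendstoUniformly {F : ℝ → ℝ} {G : ℕ → ℝ → ℝ} {α : ℝ}
    (hF : Monotone F) (hbdd : BddBelow {t | α ≤ F t})
    (hF_gt : ∀ᶠ x in 𝓝[>] sInf {t | α ≤ F t}, α < F x)
    (hG : TendstoUniformly G F atTop) (hGne : ∀ n, {t | α ≤ G n t}.Nonempty)
    (hGbdd : ∀ n, BddBelow {t | α ≤ G n t}) :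
    Tendsto (fun n => sInf {t | α ≤ G n t}) atTop (𝓝 (sInf {t | α ≤ F t})) := by
  refine tendsto_order.2 ⟨fun a ha => ?_, fun b hb => ?_⟩
  · obtain ⟨a', haa', ha'⟩ := exists_between ha
    have hFa' := apply_lt_of_lt_csInf_setOf_le hbdd ha'
    filter_upwards [Metric.tendstoUniformly_iff.1 hG _ (sub_pos.2 hFa')] with n hn
    refine haa'.trans_le (le_csInf (hGne n) fun t ht => le_of_not_gt fun hta' => ?_)
    have hdist := hn t
    rw [Real.dist_eq, abs_lt] at hdist
    linarith [hF hta'.le, ht.out]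
  · obtain ⟨b', hb'F, hb'⟩ := (hF_gt.and (Ioo_mem_nhdsGT hb)).exists
    filter_upwards [(hG.tendsto_at b').eventually_const_lt hb'F] with n hn
    exact (csInf_le (hGbdd n) hn.le).trans_lt hb'.2

lemma HasDerivAt.tendsto_dslope_comp {ι : Type*} {l : Filter ι} {F : ℝ → ℝ} {F' q : ℝ} {x : ι → ℝ}
    (hF : HasDerivAt F F' q) (hx : Tendsto x l (𝓝 q)) :
    Tendsto (fun n => dslope F q (x n)) l (𝓝 F') := by
  have := (continuousAt_dslope_same.2 hF.differentiableAt).tendsto.comp hx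
  rwa [dslope_same, hF.deriv] at this

section Linearization

variable {F h : ℝ → ℝ} {hn : ℕ → ℝ → ℝ} {tn x : ℕ → ℝ} {q F' : ℝ}

lemma isLittleO_sub_mul_sub_div_dslope (hF : HasDerivAt F F' q) (hF' : F' ≠ 0)
    (hh : ContinuousAt h q) (hunif : TendstoUniformly hn h atTop) (hx : Tendsto x atTop (𝓝 q)) :
    (fun n => x n - q - tn n * (-h q / F') -
        (F (x n) + tn n * hn n (x n) - F q) / dslope F q (x n)) =o[atTop] tn := by
  have hD := hF.tendsto_dslope_comp hx
  have hu : Tendsto (fun n => -h q / F' + hn n (x n) / dslope F q (x n)) atTop (𝓝 0) := by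
    have := (tendsto_const_nhds (x := -h q / F')).add ((hunif.tendsto_comp hh hx).div hD hF')
    simpa [neg_div] using this
  refine (((isLittleO_one_iff ℝ).2 hu).mul_isBigO (isBigO_refl tn atTop)).neg_left.congr' ?_
    (.of_forall fun _ => one_mul _)
  filter_upwards [hD.eventually_ne hF'] with n hn
  have hFx : F (x n) - F q = (x n - q) * dslope F q (x n) := (sub_smul_dslope F q (x n)).symm
  rw [add_sub_right_comm, hFx]
  field_simp
  ring

lemma eventually_sub_sub_mul_le_of_apply_le (hF : HasDerivAt F F' q) (hF' : 0 < F')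
    (hh : ContinuousAt h q) (hunif : TendstoUniformly hn h atTop) (hx : Tendsto x atTop (𝓝 q))
    (hle : ∀ᶠ n in atTop, F (x n) + tn n * hn n (x n) ≤ F q) {ε : ℝ} (hε : 0 < ε) :
    ∀ᶠ n in atTop, x n - q - tn n * (-h q / F') ≤ ε * |tn n| := by
  filter_upwards [(isLittleO_sub_mul_sub_div_dslope hF hF'.ne' hh hunif hx).bound hε,
    (hF.tendsto_dslope_comp hx).eventually (lt_mem_nhds hF'), hle] with n hbound hD hle
  have hquot : (F (x n) + tn n * hn n (x n) - F q) / dslope F q (x n) ≤ 0 :=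
    div_nonpos_of_nonpos_of_nonneg (sub_nonpos.2 hle) hD.le
  rw [Real.norm_eq_abs, Real.norm_eq_abs] at hbound
  exact (le_sub_self_iff _).2 hquot |>.trans (abs_le.1 hbound).2

lemma eventually_neg_mul_le_sub_sub_mul_of_le_apply (hF : HasDerivAt F F' q) (hF' : 0 < F')
    (hh : ContinuousAt h q) (hunif : TendstoUniformly hn h atTop) (hx : Tendsto x atTop (𝓝 q))
    (hge : ∀ᶠ n in atTop, F q ≤ F (x n) + tn n * hn n (x n)) {ε : ℝ} (hε : 0 < ε) :
    ∀ᶠ n in atTop, -(ε * |tn n|) ≤ x n - q - tn n * (-h q / F') := by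
  filter_upwards [(isLittleO_sub_mul_sub_div_dslope hF hF'.ne' hh hunif hx).bound hε,
    (hF.tendsto_dslope_comp hx).eventually (lt_mem_nhds hF'), hge] with n hbound hD hge
  have hquot : 0 ≤ (F (x n) + tn n * hn n (x n) - F q) / dslope F q (x n) :=
    div_nonneg (sub_nonneg.2 hge) hD.le
  rw [Real.norm_eq_abs, Real.norm_eq_abs] at hbound
  exact (abs_le.1 hbound).1.trans ((sub_le_self_iff _).2 hquot)

end Linearization

lemma tendsto_div_of_isLittleO {ι 𝕜 : Type*} [NormedField 𝕜] {l : Filter ι} {x t : ι → 𝕜}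
    {c : 𝕜} (ht : ∀ᶠ n in l, t n ≠ 0) (h : (fun n => x n - t n * c) =o[l] t) :
    Tendsto (fun n => x n / t n) l (𝓝 c) := by
  rw [← tendsto_sub_nhds_zero_iff]
  refine h.tendsto_div_nhds_zero.congr' ?_
  filter_upwards [ht] with n hn
  field_simp

theorem stmt17_general (F : ℝ → ℝ) (hFmono : Monotone F)
    (hF0 : Tendsto F atBot (nhds 0)) (hF1 : Tendsto F atTop (nhds 1))
    (α : ℝ) (hα : α ∈ Set.Ioo (0 : ℝ) 1)
    (q : ℝ) (hqdef : q = sInf {t : ℝ | α ≤ F t})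
    (F' : ℝ) (hFderiv : HasDerivAt F F' q) (hF'pos : 0 < F')
    (h : ℝ → ℝ) (hhbdd : Bornology.IsBounded (Set.range h))
    (hhcont : ContinuousAt h q)
    (tn : ℕ → ℝ) (htn0 : ∀ n, tn n ≠ 0) (htn : Tendsto tn atTop (nhds 0))
    (hn : ℕ → ℝ → ℝ)
    (hunif : TendstoUniformly hn h atTop)
    (hpert0 : ∀ n, Tendsto (fun t => F t + tn n * hn n t) atBot (nhds 0))
    (hpert1 : ∀ n, Tendsto (fun t => F t + tn n * hn n t) atTop (nhds 1)) :
    Tendsto (fun n =>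
        (sInf {t : ℝ | α ≤ F t + tn n * hn n t} - q) / tn n)
      atTop (nhds (-(h q) / F')) := by
  set Q := fun n => sInf {t : ℝ | α ≤ F t + tn n * hn n t}
  have hne n := nonempty_setOf_le_of_tendsto_atTop (hpert1 n) hα.2
  have hbdd n := bddBelow_setOf_le_of_tendsto_atBot (hpert0 n) hα.1
  have hFbdd := bddBelow_setOf_le_of_tendsto_atBot hF0 hα.1
  have hFq : F q = α := hqdef ▸ apply_csInf_setOf_le_eq hFmono
    (nonempty_setOf_le_of_tendsto_atTop hF1 hα.2) hFbdd (hqdef ▸ hFderiv.continuousAt)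
  have hQ : Tendsto Q atTop (𝓝 q) := hqdef ▸
    tendsto_csInf_setOf_le_of_tendstoUniformly hFmono hFbdd
    (hqdef ▸ hFq ▸ hFderiv.eventually_nhdsGT_apply_lt hF'pos)
    (tendstoUniformly_add_mul hhbdd hunif htn) hne hbdd
  have hsq : Tendsto (fun n => tn n ^ 2) atTop (𝓝 0) := by simpa using htn.pow 2
  have hsq_pos n : 0 < tn n ^ 2 := sq_pos_of_ne_zero (htn0 n)
  choose s hs_mem hs_lt using fun n =>
    exists_lt_of_csInf_lt (hne n) (lt_add_of_pos_right (Q n) (hsq_pos n))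
  have hr : Tendsto (fun n => Q n - tn n ^ 2) atTop (𝓝 q) := by simpa using hQ.sub hsq
  have hs : Tendsto s atTop (𝓝 q) :=
    tendsto_of_tendsto_of_tendsto_of_le_of_le hQ (by simpa using hQ.add hsq)
    (fun n => csInf_le (hbdd n) (hs_mem n)) (fun n => (hs_lt n).le)
  refine tendsto_div_of_isLittleO (.of_forall htn0) (isLittleO_iff.2 fun ε hε => ?_)
  filter_upwards [eventually_sub_sub_mul_le_of_apply_le hFderiv hF'pos hhcont hunif hr
      (.of_forall fun n => by
        rw [hFq]
        exact (apply_lt_of_lt_csInf_setOf_le (hbdd n) (sub_lt_self _ (hsq_pos n))).le)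
      (half_pos hε),
    eventually_neg_mul_le_sub_sub_mul_of_le_apply hFderiv hF'pos hhcont hunif hs
      (.of_forall fun n => by rw [hFq]; exact hs_mem n) (half_pos hε),
    (Metric.tendsto_nhds.1 htn) (ε / 2) (half_pos hε)] with n hup hlow hsmall
  have hsq_le : tn n ^ 2 ≤ ε / 2 * |tn n| := by
    rw [Real.dist_eq, sub_zero] at hsmall
    rw [← sq_abs, sq]
    exact mul_le_mul_of_nonneg_right hsmall.le (abs_nonneg _)
  rw [Real.norm_eq_abs, Real.norm_eq_abs, abs_le]
  constructor <;> linarith [csInf_le (hbdd n) (hs_mem n), hs_lt n]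

/-- Hadamard differentiability of the quantile map: if the cdf `F` is
differentiable at `q = F⁻¹(α)` with `F′(q) > 0`, `h` is bounded and continuous at `q`,
`tₙ ≠ 0`, `tₙ → 0`, `hₙ → h` uniformly with `hₙ` bounded, and each `F + tₙ hₙ` is
bounded with limits `0` at `−∞` and `1` at `+∞`, then
`((F + tₙ hₙ)⁻¹(α) − F⁻¹(α))/tₙ → −h(q)/F′(q)`. -/
theorem stmt17 (F : ℝ → ℝ) (hFmono : Monotone F)
    (hFrc : ∀ t, ContinuousWithinAt F (Set.Ici t) t)
    (hF0 : Tendsto F atBot (nhds 0)) (hF1 : Tendsto F atTop (nhds 1))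
    (α : ℝ) (hα : α ∈ Set.Ioo (0 : ℝ) 1)
    (q : ℝ) (hqdef : q = sInf {t : ℝ | α ≤ F t})
    (F' : ℝ) (hFderiv : HasDerivAt F F' q) (hF'pos : 0 < F')
    (h : ℝ → ℝ) (hhbdd : Bornology.IsBounded (Set.range h))
    (hhcont : ContinuousAt h q)
    (tn : ℕ → ℝ) (htn0 : ∀ n, tn n ≠ 0) (htn : Tendsto tn atTop (nhds 0))
    (hn : ℕ → ℝ → ℝ)
    (hhnbdd : ∀ n, Bornology.IsBounded (Set.range (hn n)))
    (hunif : TendstoUniformly hn h atTop)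
    (hpertbdd : ∀ n, Bornology.IsBounded (Set.range (fun t => F t + tn n * hn n t)))
    (hpert0 : ∀ n, Tendsto (fun t => F t + tn n * hn n t) atBot (nhds 0))
    (hpert1 : ∀ n, Tendsto (fun t => F t + tn n * hn n t) atTop (nhds 1)) :
    Tendsto (fun n =>
        (sInf {t : ℝ | α ≤ F t + tn n * hn n t} - q) / tn n)
      atTop (nhds (-(h q) / F')) :=
  stmt17_general F hFmono hF0 hF1 α hα q hqdef F' hFderiv hF'pos h hhbdd hhcont tn htn0 htn hn hunif
    hpert0 hpert1
end

section
/- Let (X_n)_{n≥1} be i.i.d. real random variables with distribution P and cumulative distribution function F, and let g : ℝ → ℝ^m be measurable with Pg = 0, E‖g(X_1)‖² < ∞, and Σ = P(ggᵀ) positive definite. Define the informed empirical distribution function 𝔽_{n,I}(t) = ∑_{i=1}^n p_i 1_{X_i ≤ t} and the informed empirical α-quantile q^I_{n,α} = inf{t ∈ ℝ : 𝔽_{n,I}(t) ≥ α} for α ∈ (0,1). If F is strictly increasing at q_α = F^{-1}(α) (i.e. F(q_α − ε) < α < F(q_α + ε) for every ε > 0), then q^I_{n,α} → q_α almost surely as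 n → ∞. -/
/-!
By the strong law of large numbers, almost surely `ℙ_n g → 0`, `Σ_n → Σ`, `ℙ_n |g_j|` converges,
and the empirical distribution function `𝔽_n` converges to `F` at every rational point. Hence
`v_n = Σ_n⁻¹ ℙ_n g → 0`, and since `p_i - 1/n = n⁻¹ (ℙ_n g - g(X_i)) ⬝ v_n`, the informed distribution
function stays uniformly within `δ_n = |ℙ_n g ⬝ v_n| + ∑_j |v_{n,j}| ℙ_n |g_j| → 0` of `𝔽_n`.
Since `F` increases strictly through `α` at `q_α` and `𝔽_n` is monotone, the informed quantile is
eventually trapped between any two rationals on either side of `q_α`.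
-/

open MeasureTheory ProbabilityTheory Filter Matrix Topology

theorem ae_tendsto_avg_comp {Ω E : Type*} [MeasurableSpace Ω] [MeasurableSpace E]
    {μ : Measure Ω} {P : Measure E} {X : ℕ → Ω → E} (hXmeas : ∀ i, Measurable (X i))
    (hXid : ∀ i, μ.map (X i) = P) (hXindep : iIndepFun X μ)
    {h : E → ℝ} (hmeas : Measurable h) (hint : Integrable h P) :
    ∀ᵐ ω ∂μ, Tendsto (fun n : ℕ => (n : ℝ)⁻¹ * ∑ i ∈ Finset.range n, h (X i ω)) atTop
      (𝓝 (∫ x, h x ∂P)) := by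
  have hident : ∀ i, IdentDistrib (fun ω => h (X i ω)) (fun ω => h (X 0 ω)) μ μ := fun i =>
    IdentDistrib.comp ⟨(hXmeas i).aemeasurable, (hXmeas 0).aemeasurable, by rw [hXid, hXid]⟩ hmeas
  have hint0 : Integrable (fun ω => h (X 0 ω)) μ :=
    (integrable_map_measure hmeas.aestronglyMeasurable (hXmeas 0).aemeasurable).1 (hXid 0 ▸ hint)
  have hlaw := strong_law_ae_real (fun i ω => h (X i ω)) hint0
    (fun i j hij => (hXindep.indepFun hij).comp hmeas hmeas) hident
  rw [← hXid 0, integral_map (hXmeas 0).aemeasurable hmeas.aestronglyMeasurable]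
  filter_upwards [hlaw] with ω hω
  simpa only [div_eq_inv_mul] using hω

noncomputable def empiricalCDF (x : ℕ → ℝ) (n : ℕ) (t : ℝ) : ℝ :=
  (n : ℝ)⁻¹ * ∑ i ∈ Finset.range n, if x i ≤ t then 1 else 0

theorem monotone_empiricalCDF (x : ℕ → ℝ) (n : ℕ) : Monotone (empiricalCDF x n) := by
  intro s t hst
  unfold empiricalCDF
  gcongr with i
  split_ifs with hs ht
  · rfl
  · exact absurd (hs.trans hst) ht
  · exact zero_le_one
  · rfl

theorem ae_tendsto_empiricalCDF {Ω : Type*} [MeasurableSpace Ω] {μ : Measure Ω}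
    {P : Measure ℝ} [IsFiniteMeasure P] {X : ℕ → Ω → ℝ} (hXmeas : ∀ i, Measurable (X i))
    (hXid : ∀ i, μ.map (X i) = P) (hXindep : iIndepFun X μ) (t : ℝ) :
    ∀ᵐ ω ∂μ, Tendsto (fun n => empiricalCDF (X · ω) n t) atTop (𝓝 (P.real (Set.Iic t))) := by
  have hlaw := ae_tendsto_avg_comp hXmeas hXid hXindep (h := (Set.Iic t).indicator 1)
    (measurable_one.indicator measurableSet_Iic)
    ((integrable_const (1 : ℝ)).indicator measurableSet_Iic)
  rw [integral_indicator_one measurableSet_Iic] at hlaw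
  filter_upwards [hlaw] with ω hω
  simpa [empiricalCDF, Set.indicator_apply] using hω

theorem sInf_setOf_le_mem_Icc {G : ℝ → ℝ} {α a b : ℝ} (hb : α ≤ G b)
    (ha : ∀ t ≤ a, G t < α) : sInf {t | α ≤ G t} ∈ Set.Icc a b := by
  have hlower : a ∈ lowerBounds {t | α ≤ G t} := fun t ht =>
    le_of_not_ge fun hta => (ha t hta).not_ge ht
  exact ⟨le_csInf ⟨b, hb⟩ hlower, csInf_le ⟨a, hlower⟩ hb⟩

theorem tendsto_sInf_setOf_le {F : ℝ → ℝ} {q α : ℝ}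
    (hstrict : ∀ ε > (0 : ℝ), F (q - ε) < α ∧ α < F (q + ε))
    {Fn G : ℕ → ℝ → ℝ} {δ : ℕ → ℝ} (hmono : ∀ n, Monotone (Fn n))
    (hconv : ∀ r : ℚ, Tendsto (fun n => Fn n r) atTop (𝓝 (F r)))
    (hδ : Tendsto δ atTop (𝓝 0)) (hclose : ∀ n t, |G n t - Fn n t| ≤ δ n) :
    Tendsto (fun n => sInf {t | α ≤ G n t}) atTop (𝓝 q) := by
  refine (nhds_basis_Icc_pos q).tendsto_right_iff.2 fun ε hε => ?_
  obtain ⟨a, hqa, haq⟩ := exists_rat_btwn (sub_lt_self q hε)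
  obtain ⟨b, hqb, hbq⟩ := exists_rat_btwn (lt_add_of_pos_right q hε)
  have hFa : F a < α := by simpa using (hstrict (q - a) (sub_pos.2 haq)).1
  have hFb : α < F b := by simpa using (hstrict (b - q) (sub_pos.2 hqb)).2
  have hlow : ∀ᶠ n in atTop, Fn n a + δ n < α := by
    simpa using ((hconv a).add hδ).eventually_lt_const (by simpa using hFa)
  have hup : ∀ᶠ n in atTop, α < Fn n b - δ n :=
    ((hconv b).sub hδ).eventually_const_lt (by simpa using hFb)
  filter_upwards [hlow, hup] with n hn_low hn_up
  have hmem := sInf_setOf_le_mem_Icc (G := G n) (α := α) (a := a) (b := b)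
    (by linarith [(abs_le.1 (hclose n b)).1])
    (fun t ht => by linarith [(abs_le.1 (hclose n t)).2, hmono n ht])
  exact ⟨by linarith [hmem.1], by linarith [hmem.2]⟩

theorem abs_dotProduct_le_sum {ι : Type*} [Fintype ι] (y v : ι → ℝ) :
    |y ⬝ᵥ v| ≤ ∑ j, |v j| * |y j| := by
  refine (Finset.abs_sum_le_sum_abs _ _).trans_eq ?_
  simp only [abs_mul, mul_comm]

theorem abs_informedAvg_sub_avg_le {ι : Type*} [Fintype ι] (n : ℕ) (y : ℕ → ι → ℝ)
    (c : ℕ → ℝ) (hc0 : ∀ i, 0 ≤ c i) (hc1 : ∀ i, c i ≤ 1) (u v : ι → ℝ) :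
    |∑ i ∈ Finset.range n, (n : ℝ)⁻¹ * (1 - y i ⬝ᵥ v + u ⬝ᵥ v) * c i
        - (n : ℝ)⁻¹ * ∑ i ∈ Finset.range n, c i|
      ≤ |u ⬝ᵥ v| + ∑ j, |v j| * ((n : ℝ)⁻¹ * ∑ i ∈ Finset.range n, |y i j|) := by
  have hsplit : ∑ i ∈ Finset.range n, (n : ℝ)⁻¹ * (1 - y i ⬝ᵥ v + u ⬝ᵥ v) * c i
        - (n : ℝ)⁻¹ * ∑ i ∈ Finset.range n, c i
      = u ⬝ᵥ v * ((n : ℝ)⁻¹ * ∑ i ∈ Finset.range n, c i)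
        - (n : ℝ)⁻¹ * ∑ i ∈ Finset.range n, y i ⬝ᵥ v * c i := by
    simp only [Finset.mul_sum, ← Finset.sum_sub_distrib]
    refine Finset.sum_congr rfl fun i _ => by ring
  have hn : (0 : ℝ) ≤ (n : ℝ)⁻¹ := by positivity
  have hsum : (n : ℝ)⁻¹ * ∑ i ∈ Finset.range n, c i ≤ 1 := by
    rcases n.eq_zero_or_pos with rfl | hpos
    · simp
    rw [inv_mul_le_iff₀ (by exact_mod_cast hpos)]
    simpa using Finset.sum_le_sum fun i (_ : i ∈ Finset.range n) => hc1 i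
  have hsum0 : 0 ≤ (n : ℝ)⁻¹ * ∑ i ∈ Finset.range n, c i :=
    mul_nonneg hn (Finset.sum_nonneg fun i _ => hc0 i)
  have hterm : |(n : ℝ)⁻¹ * ∑ i ∈ Finset.range n, y i ⬝ᵥ v * c i|
      ≤ ∑ j, |v j| * ((n : ℝ)⁻¹ * ∑ i ∈ Finset.range n, |y i j|) := calc
    _ ≤ (n : ℝ)⁻¹ * ∑ i ∈ Finset.range n, ∑ j, |v j| * |y i j| := by
      rw [abs_mul, abs_of_nonneg hn]
      refine mul_le_mul_of_nonneg_left ((Finset.abs_sum_le_sum_abs _ _).trans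
        (Finset.sum_le_sum fun i _ => ?_)) hn
      rw [abs_mul, abs_of_nonneg (hc0 i)]
      exact (mul_le_of_le_one_right (abs_nonneg _) (hc1 i)).trans (abs_dotProduct_le_sum _ _)
    _ = _ := by
      rw [Finset.sum_comm, Finset.mul_sum]
      simp only [Finset.mul_sum]
      refine Finset.sum_congr rfl fun j _ => Finset.sum_congr rfl fun i _ => by ring
  rw [hsplit]
  refine (abs_sub _ _).trans (add_le_add ?_ hterm)
  rw [abs_mul, abs_of_nonneg hsum0]
  exact mul_le_of_le_one_right (abs_nonneg _) hsum

theorem tendsto_inv_mulVec_of_tendsto {ι : Type*} [Fintype ι] [DecidableEq ι]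
    {S : Matrix ι ι ℝ} (hS : S.det ≠ 0) {Sn : ℕ → Matrix ι ι ℝ} {Pn : ℕ → ι → ℝ}
    (hSn : Tendsto Sn atTop (𝓝 S)) (hPn : Tendsto Pn atTop (𝓝 0)) :
    Tendsto (fun n => (Sn n)⁻¹ *ᵥ Pn n) atTop (𝓝 0) := by
  have hinv : ContinuousAt Inv.inv S := continuousAt_matrix_inv S <| by
    simpa only [Ring.inverse_eq_inv'] using continuousAt_inv₀ hS
  have hlim := ((continuous_fst.matrix_mulVec continuous_snd).tendsto (S⁻¹, 0)).comp
    ((hinv.tendsto.comp hSn).prodMk_nhds hPn)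
  rwa [mulVec_zero] at hlim

theorem tendsto_sInf_informedCDF {ι : Type*} [Fintype ι] [DecidableEq ι] {x : ℕ → ℝ}
    {g : ℝ → ι → ℝ} {S : Matrix ι ι ℝ} (hS : S.det ≠ 0) {c : ι → ℝ} {F : ℝ → ℝ} {q α : ℝ}
    (hstrict : ∀ ε > (0 : ℝ), F (q - ε) < α ∧ α < F (q + ε))
    {Pn : ℕ → ι → ℝ} {Sn : ℕ → Matrix ι ι ℝ}
    (hPn : Tendsto Pn atTop (𝓝 0)) (hSn : Tendsto Sn atTop (𝓝 S))
    (habs : ∀ j, Tendsto (fun n : ℕ => (n : ℝ)⁻¹ * ∑ i ∈ Finset.range n, |g (x i) j|) atTop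
      (𝓝 (c j)))
    (hcdf : ∀ r : ℚ, Tendsto (fun n => empiricalCDF x n r) atTop (𝓝 (F r)))
    {G : ℕ → ℝ → ℝ}
    (hG : ∀ n t, G n t = ∑ i ∈ Finset.range n, (n : ℝ)⁻¹ *
      (1 - g (x i) ⬝ᵥ ((Sn n)⁻¹ *ᵥ Pn n) + Pn n ⬝ᵥ ((Sn n)⁻¹ *ᵥ Pn n))
        * (if x i ≤ t then 1 else 0)) :
    Tendsto (fun n => sInf {t | α ≤ G n t}) atTop (𝓝 q) := by
  set v := fun n => (Sn n)⁻¹ *ᵥ Pn n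
  have hv : Tendsto v atTop (𝓝 0) := tendsto_inv_mulVec_of_tendsto hS hSn hPn
  refine tendsto_sInf_setOf_le hstrict (monotone_empiricalCDF x) hcdf
    (δ := fun n => |Pn n ⬝ᵥ v n|
      + ∑ j, |v n j| * ((n : ℝ)⁻¹ * ∑ i ∈ Finset.range n, |g (x i) j|)) ?_ fun n t => ?_
  · have hdot := ((continuous_fst.dotProduct continuous_snd).tendsto (0, 0)).comp
      (hPn.prodMk_nhds hv)
    have hsum := tendsto_finsetSum Finset.univ fun j _ =>
      ((tendsto_pi_nhds.1 hv j).abs).mul (habs j)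
    simpa using hdot.abs.add hsum
  · rw [hG]
    exact abs_informedAvg_sub_avg_le n (fun i => g (x i)) (fun i => if x i ≤ t then 1 else 0)
      (fun i => by split_ifs <;> norm_num) (fun i => by split_ifs <;> norm_num) _ _

theorem stmt18_general {Ω : Type*} [MeasurableSpace Ω]
    (μ : Measure Ω)
    (P : Measure ℝ) [IsProbabilityMeasure P]
    (m : ℕ)
    (X : ℕ → Ω → ℝ) (hXmeas : ∀ i, Measurable (X i))
    (hXid : ∀ i, Measure.map (X i) μ = P)
    (hXindep : iIndepFun X μ)
    (F : ℝ → ℝ) (hF : ∀ t, F t = (P (Set.Iic t)).toReal)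
    (g : ℝ → Fin m → ℝ) (hgmeas : ∀ j, Measurable fun x => g x j)
    (hgL2 : ∀ j, MemLp (fun x => g x j) 2 P)
    (hPg : ∀ j, (∫ x, g x j ∂P) = 0)
    (Sig : Matrix (Fin m) (Fin m) ℝ)
    (hSig : ∀ j k, Sig j k = ∫ x, g x j * g x k ∂P)
    (hposdef : Sig.PosDef)
    (Png : ℕ → Ω → Fin m → ℝ)
    (hPng : ∀ n ω j, Png n ω j = (n : ℝ)⁻¹ * ∑ i ∈ Finset.range n, g (X i ω) j)
    (Sign : ℕ → Ω → Matrix (Fin m) (Fin m) ℝ)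
    (hSign : ∀ n ω j k, Sign n ω j k =
      (n : ℝ)⁻¹ * (∑ i ∈ Finset.range n, g (X i ω) j * g (X i ω) k)
        - Png n ω j * Png n ω k)
    (p : ℕ → Ω → ℕ → ℝ)
    (hp : ∀ n ω i, p n ω i = (n : ℝ)⁻¹ *
      (1 - g (X i ω) ⬝ᵥ ((Sign n ω)⁻¹ *ᵥ Png n ω)
        + Png n ω ⬝ᵥ ((Sign n ω)⁻¹ *ᵥ Png n ω)))
    (Fni : ℕ → Ω → ℝ → ℝ)
    (hFni : ∀ n ω t, Fni n ω t =
      ∑ i ∈ Finset.range n, p n ω i * (if X i ω ≤ t then 1 else 0))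
    (α : ℝ)
    (qα : ℝ)
    (hstrict : ∀ ε > (0 : ℝ), F (qα - ε) < α ∧ α < F (qα + ε))
    (qI : ℕ → Ω → ℝ)
    (hqI : ∀ n ω, qI n ω = sInf {t : ℝ | α ≤ Fni n ω t}) :
    ∀ᵐ ω ∂μ, Tendsto (fun n => qI n ω) atTop (nhds qα) := by
  have hmean : ∀ᵐ ω ∂μ, ∀ j, Tendsto
      (fun n : ℕ => (n : ℝ)⁻¹ * ∑ i ∈ Finset.range n, g (X i ω) j) atTop (𝓝 0) :=
    ae_all_iff.2 fun j => by
      simpa only [hPg j] using ae_tendsto_avg_comp hXmeas hXid hXindep (hgmeas j)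
        ((hgL2 j).integrable one_le_two)
  have hcov : ∀ᵐ ω ∂μ, ∀ j k, Tendsto
      (fun n : ℕ => (n : ℝ)⁻¹ * ∑ i ∈ Finset.range n, g (X i ω) j * g (X i ω) k) atTop
      (𝓝 (Sig j k)) :=
    ae_all_iff.2 fun j => ae_all_iff.2 fun k => by
      simpa only [hSig j k] using ae_tendsto_avg_comp hXmeas hXid hXindep
        (h := fun x => g x j * g x k) ((hgmeas j).mul (hgmeas k))
        ((hgL2 j).integrable_mul (hgL2 k))
  have habs : ∀ᵐ ω ∂μ, ∀ j, Tendsto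
      (fun n : ℕ => (n : ℝ)⁻¹ * ∑ i ∈ Finset.range n, |g (X i ω) j|) atTop
      (𝓝 (∫ x, |g x j| ∂P)) :=
    ae_all_iff.2 fun j => ae_tendsto_avg_comp hXmeas hXid hXindep (hgmeas j).abs
      ((hgL2 j).integrable one_le_two).abs
  have hcdf : ∀ᵐ ω ∂μ, ∀ r : ℚ, Tendsto (fun n => empiricalCDF (X · ω) n r) atTop (𝓝 (F r)) :=
    ae_all_iff.2 fun r => by
      simpa only [hF, measureReal_def] using ae_tendsto_empiricalCDF hXmeas hXid hXindep r
  filter_upwards [hmean, hcov, habs, hcdf] with ω hmean hcov habs hcdf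
  have hPn : Tendsto (Png · ω) atTop (𝓝 0) :=
    tendsto_pi_nhds.2 fun j => by simpa only [hPng, Pi.zero_apply] using hmean j
  have hSn : Tendsto (Sign · ω) atTop (𝓝 Sig) :=
    tendsto_pi_nhds.2 fun j => tendsto_pi_nhds.2 fun k => by
      simpa only [hSign, Pi.zero_apply, mul_zero, sub_zero] using
        (hcov j k).sub ((tendsto_pi_nhds.1 hPn j).mul (tendsto_pi_nhds.1 hPn k))
  simp only [hqI]
  exact tendsto_sInf_informedCDF hposdef.det_pos.ne' hstrict hPn hSn habs hcdf
    fun n t => by simp only [hFni, hp]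

/-- almost sure consistency of the informed empirical `α`-quantile:
if `F` is strictly increasing at `q_α = F⁻¹(α)`, then `q^I_{n,α} → q_α` a.s. -/
theorem stmt18 {Ω : Type*} [MeasurableSpace Ω]
    (μ : Measure Ω) [IsProbabilityMeasure μ]
    (P : Measure ℝ) [IsProbabilityMeasure P]
    (m : ℕ) (hm : 0 < m)
    (X : ℕ → Ω → ℝ) (hXmeas : ∀ i, Measurable (X i))
    (hXid : ∀ i, Measure.map (X i) μ = P)
    (hXindep : iIndepFun X μ)
    (F : ℝ → ℝ) (hF : ∀ t, F t = (P (Set.Iic t)).toReal)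
    (g : ℝ → Fin m → ℝ) (hgmeas : ∀ j, Measurable fun x => g x j)
    (hgL2 : ∀ j, MemLp (fun x => g x j) 2 P)
    (hPg : ∀ j, (∫ x, g x j ∂P) = 0)
    (Sig : Matrix (Fin m) (Fin m) ℝ)
    (hSig : ∀ j k, Sig j k = ∫ x, g x j * g x k ∂P)
    (hposdef : Sig.PosDef)
    (Png : ℕ → Ω → Fin m → ℝ)
    (hPng : ∀ n ω j, Png n ω j = (n : ℝ)⁻¹ * ∑ i ∈ Finset.range n, g (X i ω) j)
    (Sign : ℕ → Ω → Matrix (Fin m) (Fin m) ℝ)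
    (hSign : ∀ n ω j k, Sign n ω j k =
      (n : ℝ)⁻¹ * (∑ i ∈ Finset.range n, g (X i ω) j * g (X i ω) k)
        - Png n ω j * Png n ω k)
    (p : ℕ → Ω → ℕ → ℝ)
    (hp : ∀ n ω i, p n ω i = (n : ℝ)⁻¹ *
      (1 - g (X i ω) ⬝ᵥ ((Sign n ω)⁻¹ *ᵥ Png n ω)
        + Png n ω ⬝ᵥ ((Sign n ω)⁻¹ *ᵥ Png n ω)))
    (Fni : ℕ → Ω → ℝ → ℝ)
    (hFni : ∀ n ω t, Fni n ω t =
      ∑ i ∈ Finset.range n, p n ω i * (if X i ω ≤ t then 1 else 0))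
    (α : ℝ) (hα : α ∈ Set.Ioo (0 : ℝ) 1)
    (qα : ℝ) (hqα : qα = sInf {t : ℝ | α ≤ F t})
    (hstrict : ∀ ε > (0 : ℝ), F (qα - ε) < α ∧ α < F (qα + ε))
    (qI : ℕ → Ω → ℝ)
    (hqI : ∀ n ω, qI n ω = sInf {t : ℝ | α ≤ Fni n ω t}) :
    ∀ᵐ ω ∂μ, Tendsto (fun n => qI n ω) atTop (nhds qα) :=
  stmt18_general μ P m X hXmeas hXid hXindep F hF g hgmeas hgL2 hPg Sig hSig hposdef Png hPng Sign
    hSign p hp Fni hFni α qα hstrict qI hqI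
end
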